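/- arXiv:2303.05035 — 3 statements merged into one kernel-verified Lean document; each statement's English description precedes it below -/
import Mathlib

section
/- Let ω ∈ ℝ³ and let ρ̂ : ℝ³ → ℝ be a radial Schwartz-class function, ρ̂(k) = ρ_r(|k|). Define B̂_ω(k) = ρ_r'(r)((k·ω)k − r²ω)/r³ with r = |k|, and let ê : ℝ³ → ℂ³ be square-integrable with k · ê(k) = 0 a.e. Then ω · ∫ [ê(k)(∇_k · B̂_ω(k)) − (ê(k) · ∇_k)B̂_ω(k)] dk = 0, because the integrand contracted with ω equals ê(k) · (k β(k)) for a scalar function β, and ê ⊥ k pointwise. -/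
/-!
Away from `k = 0` the field is `B̂_ω(k) = H(|k|²) ((k·ω)k − |k|²ω)` with
`H(t) = ρ_r'(√t) / t^{3/2}`, and `H` is differentiable on `t > 0` because `ρ_r` agrees there with
the smooth function `t ↦ ρ̂(t e₀)`. Differentiating, `ω · [ê (∇·B̂_ω) − (ê·∇)B̂_ω]` collapses to
`(k·ê) · 2(H|ω|² − H'((k·ω)² − |k|²|ω|²))`; the terms in `ω·ê` cancel only because
`∇·B̂_ω = (n − 1) H (k·ω)` with `n = 3`. Transversality `k·ê = 0` then kills the integrand a.e.
-/

open MeasureTheory Matrix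

/-- Euclidean norm on `Fin 3 → ℝ`. -/
noncomputable def enorm3 (k : Fin 3 → ℝ) : ℝ := Real.sqrt (∑ i, k i ^ 2)

/-- Divergence of a vector field on ℝ³. -/
noncomputable def div3 (F : (Fin 3 → ℝ) → (Fin 3 → ℝ)) (k : Fin 3 → ℝ) : ℝ :=
  ∑ j, fderiv ℝ (fun y => F y j) k (Pi.single j 1)

theorem dotProduct_integral {X 𝕜 ι : Type*} [MeasurableSpace X] {μ : Measure X} [RCLike 𝕜]
    [Fintype ι] (v : ι → 𝕜) {f : X → ι → 𝕜} (hf : Integrable f μ) :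
    v ⬝ᵥ ∫ x, f x ∂μ = ∫ x, v ⬝ᵥ f x ∂μ := by
  simp only [dotProduct, eval_integral hf.eval, ← integral_const_mul]
  exact (integral_finsetSum _ fun i _ => (hf.eval i).const_mul _).symm

section Calculus

variable {ι : Type*} [Fintype ι]

theorem sum_smul_proj_apply (ω v : ι → ℝ) :
    (∑ m, ω m • (ContinuousLinearMap.proj m : (ι → ℝ) →L[ℝ] ℝ)) v = ω ⬝ᵥ v := by
  simp [dotProduct]

theorem hasFDerivAt_dotProduct_const (ω x : ι → ℝ) :
    HasFDerivAt (· ⬝ᵥ ω) (∑ m, ω m • (ContinuousLinearMap.proj m : (ι → ℝ) →L[ℝ] ℝ)) x :=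
  HasFDerivAt.fun_sum fun m _ => (hasFDerivAt_apply (𝕜 := ℝ) m x).mul_const (ω m)

theorem hasFDerivAt_dotProduct_self (x : ι → ℝ) :
    HasFDerivAt (fun y : ι → ℝ => y ⬝ᵥ y)
      (2 • ∑ m, x m • (ContinuousLinearMap.proj m : (ι → ℝ) →L[ℝ] ℝ)) x := by
  rw [Finset.smul_sum]
  refine HasFDerivAt.fun_sum fun m _ => ?_
  rw [two_smul]
  exact (hasFDerivAt_apply (𝕜 := ℝ) m x).mul (hasFDerivAt_apply (𝕜 := ℝ) m x)

noncomputable def solitonField (H : ℝ → ℝ) (ω y : ι → ℝ) : ι → ℝ :=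
  H (y ⬝ᵥ y) • ((y ⬝ᵥ ω) • y - (y ⬝ᵥ y) • ω)

theorem fderiv_solitonField_apply {H : ℝ → ℝ} {k : ι → ℝ} (hH : DifferentiableAt ℝ H (k ⬝ᵥ k))
    (ω : ι → ℝ) (i : ι) (v : ι → ℝ) :
    fderiv ℝ (fun y => solitonField H ω y i) k v =
      H (k ⬝ᵥ k) * ((k ⬝ᵥ ω) * v i + (v ⬝ᵥ ω) * k i - 2 * (k ⬝ᵥ v) * ω i) +
        2 * deriv H (k ⬝ᵥ k) * (k ⬝ᵥ v) * ((k ⬝ᵥ ω) * k i - (k ⬝ᵥ k) * ω i) := by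
  have hq := hasFDerivAt_dotProduct_self k
  have hG := ((hasFDerivAt_dotProduct_const ω k).fun_mul
    (hasFDerivAt_apply (𝕜 := ℝ) i k)).fun_sub (hq.mul_const (ω i))
  have hF : HasFDerivAt (fun y => solitonField H ω y i) _ k :=
    (hH.hasDerivAt.comp_hasFDerivAt (f := fun y => y ⬝ᵥ y) k hq).fun_mul hG
  rw [hF.fderiv]
  simp only [_root_.add_apply, _root_.sub_apply,
    _root_.smul_apply, sum_smul_proj_apply, ContinuousLinearMap.proj_apply,
    Function.comp_apply, smul_eq_mul, Pi.smul_apply, Pi.sub_apply, dotProduct_comm ω v]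
  ring

end Calculus

noncomputable def variationIntegrand (B : (Fin 3 → ℝ) → Fin 3 → ℝ) (e : Fin 3 → ℂ)
    (k : Fin 3 → ℝ) : Fin 3 → ℂ :=
  fun i => e i * (div3 B k : ℂ) - ∑ j, e j * (fderiv ℝ (fun y => B y i) k (Pi.single j 1) : ℂ)

theorem dotProduct_variationIntegrand_solitonField {H : ℝ → ℝ} {k : Fin 3 → ℝ}
    (hH : DifferentiableAt ℝ H (k ⬝ᵥ k)) (ω : Fin 3 → ℝ) (e : Fin 3 → ℂ) :
    (fun i => (ω i : ℂ)) ⬝ᵥ variationIntegrand (solitonField H ω) e k =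
      ((fun i => (k i : ℂ)) ⬝ᵥ e) *
        (2 * (H (k ⬝ᵥ k) * (ω ⬝ᵥ ω) - deriv H (k ⬝ᵥ k) * ((k ⬝ᵥ ω) ^ 2 - (k ⬝ᵥ k) * (ω ⬝ᵥ ω))) :
          ℝ) := by
  unfold variationIntegrand div3
  simp only [fderiv_solitonField_apply hH, dotProduct_single, single_dotProduct]
  simp only [dotProduct, Fin.sum_univ_three, Pi.single_apply, Fin.reduceEq, ↓reduceIte]
  push_cast
  ring

theorem enorm3_eq_sqrt_dotProduct (k : Fin 3 → ℝ) : enorm3 k = √(k ⬝ᵥ k) := by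
  simp [enorm3, dotProduct, sq]

theorem differentiableAt_deriv_of_radial {f : (Fin 3 → ℝ) → ℝ} (hf : ContDiff ℝ 2 f)
    {ρr : ℝ → ℝ} (hrad : ∀ k, f k = ρr (enorm3 k)) {r : ℝ} (hr : 0 < r) :
    DifferentiableAt ℝ (deriv ρr) r := by
  set ψ : ℝ → ℝ := fun t => f (t • Pi.single 0 1)
  have hψ : ContDiff ℝ 2 ψ := hf.comp (contDiff_id.smul contDiff_const)
  have hρψ : ρr =ᶠ[nhds r] ψ := by
    filter_upwards [Ioi_mem_nhds hr] with t ht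
    simp [ψ, hrad, enorm3_eq_sqrt_dotProduct, Real.sqrt_mul_self ht.le]
  exact (hψ.differentiable_deriv_two r).congr_of_eventuallyEq hρψ.deriv

theorem differentiableAt_comp_sqrt_div_sqrt_pow {g : ℝ → ℝ} {t : ℝ} (ht : 0 < t)
    (hg : DifferentiableAt ℝ g √t) :
    DifferentiableAt ℝ (fun t => g √t / √t ^ 3) t := by
  have hsqrt : DifferentiableAt ℝ Real.sqrt t := (Real.hasDerivAt_sqrt ht.ne').differentiableAt
  exact (hg.comp t hsqrt).div (hsqrt.pow 3) (by positivity)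

theorem stmt6_general (ω : Fin 3 → ℝ)
    (ρhat : SchwartzMap (Fin 3 → ℝ) ℝ) (ρr : ℝ → ℝ)
    (hrad : ∀ k, ρhat k = ρr (enorm3 k))
    (B : (Fin 3 → ℝ) → (Fin 3 → ℝ))
    (hB : ∀ k, B k = (deriv ρr (enorm3 k) / (enorm3 k) ^ 3) •
        ((k ⬝ᵥ ω) • k - ((enorm3 k) ^ 2) • ω))
    (ehat : (Fin 3 → ℝ) → (Fin 3 → ℂ))
    (hdiv : ∀ᵐ k : Fin 3 → ℝ, (fun i => (k i : ℂ)) ⬝ᵥ ehat k = 0)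
    (hint : Integrable (fun k => (fun i =>
        ehat k i * (div3 B k : ℂ) -
        ∑ j, ehat k j * (fderiv ℝ (fun y => B y i) k (Pi.single j 1) : ℂ) : Fin 3 → ℂ))) :
    (fun i => (ω i : ℂ)) ⬝ᵥ
      (∫ k : Fin 3 → ℝ, (fun i =>
        ehat k i * (div3 B k : ℂ) -
        ∑ j, ehat k j * (fderiv ℝ (fun y => B y i) k (Pi.single j 1) : ℂ) : Fin 3 → ℂ)) = 0 := by
  set H : ℝ → ℝ := fun t => deriv ρr √t / √t ^ 3
  have hnonneg : ∀ k : Fin 3 → ℝ, 0 ≤ k ⬝ᵥ k := fun k =>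
    Finset.sum_nonneg fun i _ => mul_self_nonneg (k i)
  have hBH : B = solitonField H ω := by
    funext k
    rw [hB, solitonField, enorm3_eq_sqrt_dotProduct, Real.sq_sqrt (hnonneg k)]
  subst hBH
  have hH : ∀ k : Fin 3 → ℝ, k ≠ 0 → DifferentiableAt ℝ H (k ⬝ᵥ k) := fun k hk => by
    have hpos : 0 < k ⬝ᵥ k := (hnonneg k).lt_of_ne' (dotProduct_self_eq_zero.not.2 hk)
    exact differentiableAt_comp_sqrt_div_sqrt_pow hpos
      (differentiableAt_deriv_of_radial (ρhat.smooth 2) hrad (Real.sqrt_pos.2 hpos))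
  rw [dotProduct_integral _ hint]
  refine integral_eq_zero_of_ae ?_
  filter_upwards [hdiv, Measure.ae_ne volume 0] with k hk hk0
  have hβ := dotProduct_variationIntegrand_solitonField (hH k hk0) ω (ehat k)
  rwa [hk, zero_mul] at hβ

/-- First variational equation: for the soliton magnetic field
`B̂_ω(k) = ρ_r'(r)((k·ω)k − r²ω)/r³` and any divergence-free L² field `ê`,
`ω · ∫ [ê(k)(∇·B̂_ω)(k) − (ê(k)·∇)B̂_ω(k)] dk = 0`. -/
theorem stmt6 (ω : Fin 3 → ℝ)
    (ρhat : SchwartzMap (Fin 3 → ℝ) ℝ) (ρr : ℝ → ℝ)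
    (hrad : ∀ k, ρhat k = ρr (enorm3 k))
    (B : (Fin 3 → ℝ) → (Fin 3 → ℝ))
    (hB : ∀ k, B k = (deriv ρr (enorm3 k) / (enorm3 k) ^ 3) •
        ((k ⬝ᵥ ω) • k - ((enorm3 k) ^ 2) • ω))
    (ehat : (Fin 3 → ℝ) → (Fin 3 → ℂ))
    (he2 : MemLp ehat 2 (volume : Measure (Fin 3 → ℝ)))
    (hdiv : ∀ᵐ k : Fin 3 → ℝ, (fun i => (k i : ℂ)) ⬝ᵥ ehat k = 0)
    (hint : Integrable (fun k => (fun i =>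
        ehat k i * (div3 B k : ℂ) -
        ∑ j, ehat k j * (fderiv ℝ (fun y => B y i) k (Pi.single j 1) : ℂ) : Fin 3 → ℂ))) :
    (fun i => (ω i : ℂ)) ⬝ᵥ
      (∫ k : Fin 3 → ℝ, (fun i =>
        ehat k i * (div3 B k : ℂ) -
        ∑ j, ehat k j * (fderiv ℝ (fun y => B y i) k (Pi.single j 1) : ℂ) : Fin 3 → ℂ)) = 0 :=
  stmt6_general ω ρhat ρr hrad B hB ehat hdiv hint
end

section
/- Let ρ_r : (0,∞) → ℝ be smooth with sufficient decay, ω ∈ ℝ³, and let b̂ : ℝ³ → ℂ³ be a nice (e.g. Schwartz) vector field with k · b̂(k) = 0. Define Ê(k) = −ik ρ_r(r)/r² and B̂(k) = ρ_r'(r)((k·ω)k − r²ω)/r³, r = |k|. Then ∫ b̂(k) · B̂(k) dk − ω · ∫ [(i∇_k · b̂(k)) conj(Ê(k)) − b̂(k) conj(i∇_k · Ê(k))] dk = 0. -/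
open MeasureTheory Matrix

/-- Complex divergence of a vector field on ℝ³. -/
noncomputable def divC (F : (Fin 3 → ℝ) → (Fin 3 → ℂ)) (k : Fin 3 → ℝ) : ℂ :=
  ∑ j, fderiv ℝ (fun y => F y j) k (Pi.single j 1)

namespace Stmt7Aux


noncomputable def q3 (k : Fin 3 → ℝ) : ℝ := ∑ i, k i ^ 2

lemma q3_nonneg (k : Fin 3 → ℝ) : 0 ≤ q3 k :=
  Finset.sum_nonneg fun i _ => sq_nonneg _

lemma enorm3_sq (k : Fin 3 → ℝ) : enorm3 k ^ 2 = q3 k :=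
  Real.sq_sqrt (q3_nonneg k)

lemma q3_pos {k : Fin 3 → ℝ} (hk : k ≠ 0) : 0 < q3 k := by
  rcases Function.ne_iff.1 hk with ⟨i, hi⟩
  have : 0 < k i ^ 2 := by
    have : k i ≠ 0 := hi
    positivity
  refine lt_of_lt_of_le this ?_
  exact Finset.single_le_sum (f := fun i => k i ^ 2) (fun j _ => sq_nonneg _) (Finset.mem_univ i)

lemma enorm3_pos {k : Fin 3 → ℝ} (hk : k ≠ 0) : 0 < enorm3 k :=
  Real.sqrt_pos.2 (q3_pos hk)

/-- the linear map `v ↦ ∑ i, w i * v i`. -/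
noncomputable def Lv (w : Fin 3 → ℝ) : (Fin 3 → ℝ) →L[ℝ] ℝ :=
  ∑ i, w i • ContinuousLinearMap.proj i

lemma Lv_apply (w v : Fin 3 → ℝ) : Lv w v = ∑ i, w i * v i := by
  simp [Lv, ContinuousLinearMap.sum_apply]

lemma Lv_single (w : Fin 3 → ℝ) (j : Fin 3) : Lv w (Pi.single j 1) = w j := by
  rw [Lv_apply]
  simp [Pi.single_apply]

lemma hasFDerivAt_q3 (k : Fin 3 → ℝ) : HasFDerivAt q3 ((2:ℝ) • Lv k) k := by
  have h : ∀ i : Fin 3, HasFDerivAt (fun y : Fin 3 → ℝ => y i ^ 2)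
      ((2 * k i) • ContinuousLinearMap.proj (R := ℝ) (φ := fun _ : Fin 3 => ℝ) i) k := by
    intro i
    have hp : HasFDerivAt (fun y : Fin 3 → ℝ => y i)
        (ContinuousLinearMap.proj (R := ℝ) (φ := fun _ : Fin 3 => ℝ) i) k :=
      (ContinuousLinearMap.proj (R := ℝ) (φ := fun _ : Fin 3 => ℝ) i).hasFDerivAt
    have := hp.mul hp
    have heq : (fun y : Fin 3 → ℝ => y i ^ 2) = fun y => y i * y i := by
      funext y; ring
    rw [heq]
    convert this using 1
    any_goals rfl
    ext v
    simp
    ring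
  have hs := HasFDerivAt.fun_sum (u := Finset.univ) (fun i _ => h i)
  have : q3 = fun y : Fin 3 → ℝ => ∑ i, y i ^ 2 := rfl
  rw [this]
  convert hs using 1
  any_goals rfl
  ext v
  simp [Lv, ContinuousLinearMap.sum_apply, Finset.mul_sum]
  ring_nf

lemma hasFDerivAt_dot (ω k : Fin 3 → ℝ) :
    HasFDerivAt (fun y : Fin 3 → ℝ => y ⬝ᵥ ω) (Lv ω) k := by
  have h : ∀ i : Fin 3, HasFDerivAt (fun y : Fin 3 → ℝ => y i * ω i)
      (ω i • ContinuousLinearMap.proj (R := ℝ) (φ := fun _ : Fin 3 => ℝ) i) k := by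
    intro i
    have hp : HasFDerivAt (fun y : Fin 3 → ℝ => y i)
        (ContinuousLinearMap.proj (R := ℝ) (φ := fun _ : Fin 3 => ℝ) i) k :=
      (ContinuousLinearMap.proj (R := ℝ) (φ := fun _ : Fin 3 => ℝ) i).hasFDerivAt
    have := hp.mul_const (ω i)
    convert this using 1
    all_goals ext v; simp [mul_comm]
  have hs := HasFDerivAt.fun_sum (u := Finset.univ) (fun i _ => h i)
  have : (fun y : Fin 3 → ℝ => y ⬝ᵥ ω) = fun y => ∑ i, y i * ω i := rfl
  rw [this]
  convert hs using 1
  all_goals ext v; simp [Lv, ContinuousLinearMap.sum_apply]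

lemma hasFDerivAt_enorm3 {k : Fin 3 → ℝ} (hk : k ≠ 0) :
    HasFDerivAt enorm3 ((enorm3 k)⁻¹ • Lv k) k := by
  have hq := hasFDerivAt_q3 k
  have hs := (Real.hasDerivAt_sqrt (ne_of_gt (q3_pos hk))).comp_hasFDerivAt k hq
  have : enorm3 = fun y => Real.sqrt (q3 y) := rfl
  rw [this]
  convert hs using 1
  any_goals rfl
  all_goals
    rw [smul_smul]
    congr 1
    have h1 : Real.sqrt (q3 k) ≠ 0 := ne_of_gt (enorm3_pos hk)
    field_simp [enorm3]

/-- scalar coefficient in the derivative of `A = ρ(r)/q`. -/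
noncomputable def cA (ρr : ℝ → ℝ) (k : Fin 3 → ℝ) : ℝ :=
  deriv ρr (enorm3 k) / (enorm3 k * q3 k) - 2 * ρr (enorm3 k) / (q3 k) ^ 2

/-- `A = ρ(r)/q = ρ(r)/r²`. -/
noncomputable def Af (ρr : ℝ → ℝ) (k : Fin 3 → ℝ) : ℝ := ρr (enorm3 k) / q3 k

lemma hasFDerivAt_Af {ρr : ℝ → ℝ} (hρ : ContDiffOn ℝ (⊤ : ℕ∞) ρr (Set.Ioi 0)) {k : Fin 3 → ℝ}
    (hk : k ≠ 0) : HasFDerivAt (Af ρr) (cA ρr k • Lv k) k := by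
  have hr := hasFDerivAt_enorm3 hk
  have hrpos := enorm3_pos hk
  have hqpos := q3_pos hk
  have hρd : HasDerivAt ρr (deriv ρr (enorm3 k)) (enorm3 k) := by
    have h1 : DifferentiableWithinAt ℝ ρr (Set.Ioi 0) (enorm3 k) :=
      (hρ.differentiableOn (by simp)) _ hrpos
    have h2 : DifferentiableAt ℝ ρr (enorm3 k) :=
      h1.differentiableAt (Filter.eventually_of_mem (Ioi_mem_nhds hrpos) fun _ h => h)
    exact h2.hasDerivAt
  have hρr : HasFDerivAt (fun y => ρr (enorm3 y))
      ((deriv ρr (enorm3 k) * (enorm3 k)⁻¹) • Lv k) k := by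
    have := hρd.comp_hasFDerivAt k hr
    convert this using 1
    any_goals rfl
    all_goals rw [smul_smul]
  have hqinv : HasFDerivAt (fun y => (q3 y)⁻¹)
      ((-(q3 k ^ 2)⁻¹ * 2) • Lv k) k := by
    have := (hasDerivAt_inv (ne_of_gt hqpos)).comp_hasFDerivAt k (hasFDerivAt_q3 k)
    convert this using 1
    any_goals rfl
    all_goals first | (rw [smul_smul]; congr 1; ring) | rw [smul_smul]
  have hmul := hρr.mul hqinv
  have : Af ρr = fun y => ρr (enorm3 y) * (q3 y)⁻¹ := by
    funext y; simp [Af, div_eq_mul_inv]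
  rw [this]
  convert hmul using 1
  any_goals rfl
  rw [smul_smul, smul_smul, ← add_smul]
  congr 1
  simp only [cA]
  field_simp
  ring


noncomputable def phi (ρr : ℝ → ℝ) (ω : Fin 3 → ℝ) (k : Fin 3 → ℝ) : ℝ :=
  (k ⬝ᵥ ω) * Af ρr k

lemma hasFDerivAt_phi {ρr : ℝ → ℝ} (hρ : ContDiffOn ℝ (⊤ : ℕ∞) ρr (Set.Ioi 0)) (ω : Fin 3 → ℝ)
    {k : Fin 3 → ℝ} (hk : k ≠ 0) :
    HasFDerivAt (phi ρr ω)
      (((k ⬝ᵥ ω) * cA ρr k) • Lv k + Af ρr k • Lv ω) k := by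
  have := (hasFDerivAt_dot ω k).mul (hasFDerivAt_Af hρ hk)
  convert this using 1
  any_goals rfl
  rw [smul_smul]

noncomputable abbrev cR : ℝ →L[ℝ] ℂ := Complex.ofRealCLM

lemma enorm3_sq_real (k : Fin 3 → ℝ) : ((enorm3 k ^ 2 : ℝ) : ℂ) = ((q3 k : ℝ) : ℂ) := by
  rw [enorm3_sq]

lemma Ehat_eq {ρr : ℝ → ℝ} {Ehat : (Fin 3 → ℝ) → (Fin 3 → ℂ)}
    (hE : ∀ k i, Ehat k i = -Complex.I * (k i) * (ρr (enorm3 k)) / ((enorm3 k) ^ 2 : ℝ))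
    (j : Fin 3) :
    (fun y => Ehat y j) = fun y => -Complex.I * ((y j : ℂ) * ((Af ρr y : ℝ) : ℂ)) := by
  funext y
  rw [hE y j, enorm3_sq_real]
  simp only [Af]
  push_cast
  by_cases hq : (q3 y : ℝ) = 0
  · simp [hq]
  · field_simp

lemma hasFDerivAt_Ehat_comp {ρr : ℝ → ℝ} (hρ : ContDiffOn ℝ (⊤ : ℕ∞) ρr (Set.Ioi 0))
    {k : Fin 3 → ℝ} (hk : k ≠ 0) (j : Fin 3) :
    HasFDerivAt (fun y => -Complex.I * ((y j : ℂ) * ((Af ρr y : ℝ) : ℂ)))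
      ((-Complex.I) • ((k j : ℂ) • (cR.comp (cA ρr k • Lv k)) +
        ((Af ρr k : ℝ) : ℂ) • (cR.comp (ContinuousLinearMap.proj j)))) k := by
  have hA := cR.hasFDerivAt.comp k (hasFDerivAt_Af hρ hk)
  have hyj : HasFDerivAt (fun y : Fin 3 → ℝ => ((y j : ℝ) : ℂ))
      (cR.comp (ContinuousLinearMap.proj (R := ℝ) (φ := fun _ : Fin 3 => ℝ) j)) k := by
    exact cR.hasFDerivAt.comp k
      ((ContinuousLinearMap.proj (R := ℝ) (φ := fun _ : Fin 3 => ℝ) j).hasFDerivAt)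
  have := (hyj.mul hA).const_mul (-Complex.I)
  convert this using 1
  any_goals rfl

lemma divC_Ehat {ρr : ℝ → ℝ} (hρ : ContDiffOn ℝ (⊤ : ℕ∞) ρr (Set.Ioi 0))
    {Ehat : (Fin 3 → ℝ) → (Fin 3 → ℂ)}
    (hE : ∀ k i, Ehat k i = -Complex.I * (k i) * (ρr (enorm3 k)) / ((enorm3 k) ^ 2 : ℝ))
    {k : Fin 3 → ℝ} (hk : k ≠ 0) :
    divC Ehat k = -Complex.I * (((Af ρr k : ℝ) : ℂ) +
      ((deriv ρr (enorm3 k) / enorm3 k : ℝ) : ℂ)) := by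
  have hterm : ∀ j : Fin 3, fderiv ℝ (fun y => Ehat y j) k (Pi.single j 1) =
      -Complex.I * (((cA ρr k * k j : ℝ) : ℂ) * (k j : ℂ) + ((Af ρr k : ℝ) : ℂ)) := by
    intro j
    rw [Ehat_eq hE j, (hasFDerivAt_Ehat_comp hρ hk j).fderiv]
    simp [Lv_single, ContinuousLinearMap.smul_apply, ContinuousLinearMap.comp_apply,
      Pi.single_apply]
    push_cast
    ring
  unfold divC
  rw [Finset.sum_congr rfl fun j _ => hterm j]
  have hsum : (∑ j : Fin 3, (-Complex.I * (((cA ρr k * k j : ℝ) : ℂ) * (k j : ℂ) +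
      ((Af ρr k : ℝ) : ℂ)))) =
      -Complex.I * (((cA ρr k * q3 k + 3 * Af ρr k : ℝ) : ℝ) : ℂ) := by
    rw [← Finset.mul_sum]
    congr 1
    rw [Finset.sum_add_distrib]
    push_cast
    simp only [q3]
    push_cast
    rw [Finset.mul_sum]
    simp [Fin.sum_univ_three]
    ring
  rw [hsum]
  congr 1
  have hr := enorm3_pos hk
  have hq := q3_pos hk
  have hqr : enorm3 k ^ 2 = q3 k := enorm3_sq k
  have : cA ρr k * q3 k + 3 * Af ρr k = Af ρr k + deriv ρr (enorm3 k) / enorm3 k := by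
    simp only [cA, Af]
    field_simp
    nlinarith [hqr, sq_nonneg (enorm3 k)]
  rw [this]
  push_cast
  ring


noncomputable def gb (n : ℕ) : ContDiffBump (0 : ℝ) :=
  ⟨n + 1, n + 2, by positivity, by linarith⟩

noncomputable def hbmp (n : ℕ) : ContDiffBump (0 : ℝ) :=
  ⟨(2 * (n + 1 : ℝ))⁻¹, ((n : ℝ) + 1)⁻¹, by positivity, by
    rw [inv_lt_inv₀ (by positivity) (by positivity)]
    linarith⟩

noncomputable def eta (n : ℕ) (s : ℝ) : ℝ := gb n s * (1 - hbmp n s)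

lemma eta_differentiable (n : ℕ) : Differentiable ℝ (eta n) := by
  unfold eta
  exact (((gb n).contDiff (n := 1)).mul
    (contDiff_const.sub ((hbmp n).contDiff (n := 1)))).differentiable (by norm_num)

lemma eta_nonneg (n : ℕ) (s : ℝ) : 0 ≤ eta n s :=
  mul_nonneg ((gb n).nonneg) (by linarith [(hbmp n).le_one (x := s)])

lemma eta_le_one (n : ℕ) (s : ℝ) : eta n s ≤ 1 := by
  have h1 := (gb n).le_one (x := s)
  have h2 := (hbmp n).nonneg (x := s)
  have h3 := (gb n).nonneg (x := s)
  unfold eta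
  nlinarith

lemma eta_one {n : ℕ} {s : ℝ} (h1 : ((n : ℝ) + 1)⁻¹ ≤ s) (h2 : s ≤ (n : ℝ) + 1) :
    eta n s = 1 := by
  have hg : gb n s = 1 := by
    apply (gb n).one_of_mem_closedBall
    simp only [Metric.mem_closedBall, Real.dist_eq, sub_zero]
    rw [abs_le]
    constructor
    · have : (0:ℝ) < ((n : ℝ) + 1)⁻¹ := by positivity
      simp only [gb]
      linarith
    · simp only [gb]; exact h2
  have hh : hbmp n s = 0 := by
    apply (hbmp n).zero_of_le_dist
    simp only [Real.dist_eq, sub_zero]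
    rw [le_abs]
    left
    exact h1
  rw [eta, hg, hh]
  ring

lemma eta_zero_of_ge {n : ℕ} {s : ℝ} (h : (n : ℝ) + 2 ≤ s) : eta n s = 0 := by
  have hg : gb n s = 0 := by
    apply (gb n).zero_of_le_dist
    simp only [Real.dist_eq, sub_zero]
    rw [le_abs]
    left
    exact h
  rw [eta, hg, zero_mul]

lemma eta_zero_of_le {n : ℕ} {s : ℝ} (h0 : 0 ≤ s) (h : s ≤ (2 * ((n : ℝ) + 1))⁻¹) :
    eta n s = 0 := by
  have hh : hbmp n s = 1 := by
    apply (hbmp n).one_of_mem_closedBall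
    simp only [Metric.mem_closedBall, Real.dist_eq, sub_zero]
    rw [abs_le]
    constructor
    · have : (0:ℝ) < (2 * ((n : ℝ) + 1))⁻¹ := by positivity
      simp only [hbmp]
      linarith
    · simpa [hbmp] using h
  rw [eta, hh]
  ring


lemma q3_continuous : Continuous q3 := by
  unfold q3
  exact continuous_finset_sum _ fun i _ => (continuous_apply i).pow 2

lemma bcomp_differentiable (bhat : SchwartzMap (Fin 3 → ℝ) (Fin 3 → ℂ)) (j : Fin 3) :
    Differentiable ℝ (fun y => bhat y j) := by
  have h1 : Differentiable ℝ (fun y => bhat y) := bhat.differentiable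
  exact fun k => ((ContinuousLinearMap.proj (R := ℂ) (φ := fun _ : Fin 3 => ℂ)
    j).differentiableAt.restrictScalars ℝ).comp k (h1 k)

/-- divergence of bhat -/
noncomputable def divb (bhat : SchwartzMap (Fin 3 → ℝ) (Fin 3 → ℂ)) (k : Fin 3 → ℝ) : ℂ :=
  divC (fun y => bhat y) k

/-- the combination that the main integrand equals a.e. -/
noncomputable def Gnice (ρr : ℝ → ℝ) (ω : Fin 3 → ℝ)
    (bhat : SchwartzMap (Fin 3 → ℝ) (Fin 3 → ℂ)) (k : Fin 3 → ℝ) : ℂ :=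
  ((Af ρr k : ℝ) : ℂ) * (∑ i, bhat k i * ((ω i : ℝ) : ℂ)) +
    ((phi ρr ω k : ℝ) : ℂ) * divb bhat k

/-- the cutoff scalar -/
noncomputable def scal (ρr : ℝ → ℝ) (ω : Fin 3 → ℝ) (n : ℕ) (y : Fin 3 → ℝ) : ℝ :=
  eta n (q3 y) * phi ρr ω y

/-- the cutoff vector field -/
noncomputable def Vn (ρr : ℝ → ℝ) (ω : Fin 3 → ℝ)
    (bhat : SchwartzMap (Fin 3 → ℝ) (Fin 3 → ℂ)) (n : ℕ)
    (y : Fin 3 → ℝ) (j : Fin 3) : ℂ :=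
  ((scal ρr ω n y : ℝ) : ℂ) * bhat y j

lemma Vn_zero_near {ρr : ℝ → ℝ} {ω : Fin 3 → ℝ} {bhat : SchwartzMap (Fin 3 → ℝ) (Fin 3 → ℂ)}
    {n : ℕ} {y : Fin 3 → ℝ} (hy : q3 y < (2 * ((n : ℝ) + 1))⁻¹) (j : Fin 3) :
    Vn ρr ω bhat n y j = 0 := by
  rw [Vn, scal, eta_zero_of_le (q3_nonneg y) hy.le]
  push_cast
  ring

lemma Vn_hasFDerivAt_small {ρr : ℝ → ℝ} {ω : Fin 3 → ℝ}
    {bhat : SchwartzMap (Fin 3 → ℝ) (Fin 3 → ℂ)} {n : ℕ} {k : Fin 3 → ℝ}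
    (hk : q3 k < (2 * ((n : ℝ) + 1))⁻¹) (j : Fin 3) :
    HasFDerivAt (fun y => Vn ρr ω bhat n y j) (0 : (Fin 3 → ℝ) →L[ℝ] ℂ) k := by
  have hU : IsOpen {y : Fin 3 → ℝ | q3 y < (2 * ((n : ℝ) + 1))⁻¹} :=
    isOpen_lt q3_continuous continuous_const
  have hmem : k ∈ {y : Fin 3 → ℝ | q3 y < (2 * ((n : ℝ) + 1))⁻¹} := hk
  have hev : (fun y => Vn ρr ω bhat n y j) =ᶠ[nhds k] fun _ => (0 : ℂ) := by
    filter_upwards [hU.mem_nhds hmem] with y hy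
    exact Vn_zero_near hy j
  exact (hasFDerivAt_const (0 : ℂ) k).congr_of_eventuallyEq hev

lemma Vn_hasFDerivAt_ne {ρr : ℝ → ℝ} (hρ : ContDiffOn ℝ (⊤ : ℕ∞) ρr (Set.Ioi 0)) {ω : Fin 3 → ℝ}
    {bhat : SchwartzMap (Fin 3 → ℝ) (Fin 3 → ℂ)} {n : ℕ} {k : Fin 3 → ℝ}
    (hk : k ≠ 0) (j : Fin 3) :
    HasFDerivAt (fun y => Vn ρr ω bhat n y j)
      (((scal ρr ω n k : ℝ) : ℂ) • fderiv ℝ (fun y => bhat y j) k +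
        bhat k j • (cR.comp
          (eta n (q3 k) • (((k ⬝ᵥ ω) * cA ρr k) • Lv k + Af ρr k • Lv ω) +
            phi ρr ω k • (deriv (eta n) (q3 k) • ((2:ℝ) • Lv k))))) k := by
  have hq := hasFDerivAt_q3 k
  have hetaq : HasFDerivAt (fun y => eta n (q3 y))
      (deriv (eta n) (q3 k) • ((2:ℝ) • Lv k)) k :=
    ((eta_differentiable n (q3 k)).hasDerivAt).comp_hasFDerivAt k hq
  have hphi := hasFDerivAt_phi hρ ω hk
  have hscal : HasFDerivAt (scal ρr ω n)
      (eta n (q3 k) • (((k ⬝ᵥ ω) * cA ρr k) • Lv k + Af ρr k • Lv ω) +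
        phi ρr ω k • (deriv (eta n) (q3 k) • ((2:ℝ) • Lv k))) k := by
    have := hetaq.mul hphi
    convert this using 1
    any_goals rfl
  have hscalC : HasFDerivAt (fun y => ((scal ρr ω n y : ℝ) : ℂ))
      (cR.comp (eta n (q3 k) • (((k ⬝ᵥ ω) * cA ρr k) • Lv k + Af ρr k • Lv ω) +
        phi ρr ω k • (deriv (eta n) (q3 k) • ((2:ℝ) • Lv k)))) k :=
    cR.hasFDerivAt.comp k hscal
  have hbj : HasFDerivAt (fun y => bhat y j) (fderiv ℝ (fun y => bhat y j) k) k :=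
    (bcomp_differentiable bhat j k).hasFDerivAt
  have := hscalC.mul hbj
  convert this using 1
  any_goals rfl

lemma Vn_differentiableAt {ρr : ℝ → ℝ} (hρ : ContDiffOn ℝ (⊤ : ℕ∞) ρr (Set.Ioi 0)) {ω : Fin 3 → ℝ}
    {bhat : SchwartzMap (Fin 3 → ℝ) (Fin 3 → ℂ)} {n : ℕ} (k : Fin 3 → ℝ) (j : Fin 3) :
    DifferentiableAt ℝ (fun y => Vn ρr ω bhat n y j) k := by
  by_cases hk : q3 k < (2 * ((n : ℝ) + 1))⁻¹
  · exact (Vn_hasFDerivAt_small hk j).differentiableAt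
  · have hkne : k ≠ 0 := by
      intro h
      apply hk
      subst h
      have h0 : q3 (0 : Fin 3 → ℝ) = 0 := by simp [q3]
      rw [h0]
      positivity
    exact (Vn_hasFDerivAt_ne hρ hkne j).differentiableAt

lemma Vn_div_eq {ρr : ℝ → ℝ} (hρ : ContDiffOn ℝ (⊤ : ℕ∞) ρr (Set.Ioi 0)) {ω : Fin 3 → ℝ}
    {bhat : SchwartzMap (Fin 3 → ℝ) (Fin 3 → ℂ)}
    (hdiv : ∀ k : Fin 3 → ℝ, (fun i => (k i : ℂ)) ⬝ᵥ bhat k = 0)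
    {n : ℕ} (k : Fin 3 → ℝ) :
    ∑ j, fderiv ℝ (fun y => Vn ρr ω bhat n y j) k (Pi.single j 1) =
      ((eta n (q3 k) : ℝ) : ℂ) * Gnice ρr ω bhat k := by
  by_cases hk : q3 k < (2 * ((n : ℝ) + 1))⁻¹
  · have h0 : ∀ j : Fin 3, fderiv ℝ (fun y => Vn ρr ω bhat n y j) k = 0 :=
      fun j => (Vn_hasFDerivAt_small hk j).fderiv
    simp only [h0, ContinuousLinearMap.zero_apply, Finset.sum_const_zero]
    rw [eta_zero_of_le (q3_nonneg k) hk.le]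
    simp
  · have hkne : k ≠ 0 := by
      intro h
      apply hk
      subst h
      have h0 : q3 (0 : Fin 3 → ℝ) = 0 := by simp [q3]
      rw [h0]
      positivity
    have hfd : ∀ j : Fin 3, fderiv ℝ (fun y => Vn ρr ω bhat n y j) k =
        (((scal ρr ω n k : ℝ) : ℂ) • fderiv ℝ (fun y => bhat y j) k +
          bhat k j • (cR.comp
            (eta n (q3 k) • (((k ⬝ᵥ ω) * cA ρr k) • Lv k + Af ρr k • Lv ω) +
              phi ρr ω k • (deriv (eta n) (q3 k) • ((2:ℝ) • Lv k))))) :=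
      fun j => (Vn_hasFDerivAt_ne hρ hkne j).fderiv
    simp only [hfd, ContinuousLinearMap.add_apply, ContinuousLinearMap.smul_apply,
      ContinuousLinearMap.comp_apply, Complex.ofRealCLM_apply, Lv_single,
      smul_eq_mul, Complex.real_smul]
    have hdiv' := hdiv k
    simp only [dotProduct] at hdiv'
    rw [Fin.sum_univ_three] at hdiv' ⊢
    simp only [Gnice, divb, divC, scal, phi]
    rw [Fin.sum_univ_three (f := fun j =>
      fderiv ℝ (fun y => bhat y j) k (Pi.single j 1))]
    rw [Fin.sum_univ_three (f := fun i => bhat k i * ((ω i : ℝ) : ℂ))]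
    push_cast
    linear_combination (((eta n (q3 k) : ℝ) : ℂ) * (((k ⬝ᵥ ω : ℝ) : ℂ) * ((cA ρr k : ℝ):ℂ)) +
      (((k ⬝ᵥ ω : ℝ) : ℂ) * ((Af ρr k : ℝ):ℂ)) * (((deriv (eta n) (q3 k) : ℝ):ℂ) * 2)) * hdiv'



lemma G_eq {ρr : ℝ → ℝ} (hρ : ContDiffOn ℝ (⊤ : ℕ∞) ρr (Set.Ioi 0)) {ω : Fin 3 → ℝ}
    {bhat : SchwartzMap (Fin 3 → ℝ) (Fin 3 → ℂ)}
    (hdiv : ∀ k : Fin 3 → ℝ, (fun i => (k i : ℂ)) ⬝ᵥ bhat k = 0)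
    {Ehat : (Fin 3 → ℝ) → (Fin 3 → ℂ)}
    (hE : ∀ k i, Ehat k i = -Complex.I * (k i) * (ρr (enorm3 k)) / ((enorm3 k) ^ 2 : ℝ))
    {B : (Fin 3 → ℝ) → (Fin 3 → ℝ)}
    (hB : ∀ k, B k = (deriv ρr (enorm3 k) / (enorm3 k) ^ 3) •
        ((k ⬝ᵥ ω) • k - ((enorm3 k) ^ 2) • ω))
    {k : Fin 3 → ℝ} (hk : k ≠ 0) :
    ((bhat k) ⬝ᵥ (fun i => (B k i : ℂ))) -
      ∑ i, ((ω i : ℝ) : ℂ) *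
        ((Complex.I * divC (fun y => bhat y) k) * starRingEnd ℂ (Ehat k i) -
          bhat k i * starRingEnd ℂ (Complex.I * divC Ehat k)) =
      Gnice ρr ω bhat k := by
  have hrne : (enorm3 k : ℝ) ≠ 0 := ne_of_gt (enorm3_pos hk)
  have hdiv' := hdiv k
  simp only [dotProduct, Fin.sum_univ_three] at hdiv'
  set Bw : ℂ := ∑ i, bhat k i * ((ω i : ℝ) : ℂ) with hBw
  set db : ℂ := divC (fun y => bhat y) k with hdb
  -- (1) b · B
  have h1 : ((bhat k) ⬝ᵥ (fun i => (B k i : ℂ))) =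
      (-(((deriv ρr (enorm3 k) : ℝ) : ℂ) / ((enorm3 k : ℝ) : ℂ) ^ 3 *
        ((enorm3 k : ℝ) : ℂ) ^ 2)) * Bw := by
    simp only [dotProduct, hB, Pi.smul_apply, Pi.sub_apply, smul_eq_mul, hBw]
    simp only [Fin.sum_univ_three]
    push_cast
    linear_combination (((deriv ρr (enorm3 k) : ℝ) : ℂ) / ((enorm3 k : ℝ) : ℂ) ^ 3 *
      (((k 0 : ℝ) : ℂ) * ((ω 0 : ℝ) : ℂ) + ((k 1 : ℝ) : ℂ) * ((ω 1 : ℝ) : ℂ) +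
        ((k 2 : ℝ) : ℂ) * ((ω 2 : ℝ) : ℂ))) * hdiv'
  -- conj of Ehat components
  have hconjE : ∀ i, starRingEnd ℂ (Ehat k i) =
      Complex.I * ((k i : ℝ) : ℂ) * ((Af ρr k : ℝ) : ℂ) := by
    intro i
    have := congrFun (Ehat_eq hE i) k
    rw [this]
    simp [_root_.map_mul, Complex.conj_I, Complex.conj_ofReal]
    ring
  -- conj of I * div Ehat
  have hIdivE : starRingEnd ℂ (Complex.I * divC Ehat k) =
      ((Af ρr k : ℝ) : ℂ) + ((deriv ρr (enorm3 k) / enorm3 k : ℝ) : ℂ) := by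
    rw [divC_Ehat hρ hE hk]
    set a := ((Af ρr k : ℝ) : ℂ) with ha
    set b := ((deriv ρr (enorm3 k) / enorm3 k : ℝ) : ℂ) with hb
    have key : Complex.I * (-Complex.I * (a + b)) = a + b := by
      linear_combination (-(a + b)) * Complex.I_mul_I
    rw [key, ha, hb]
    simp only [map_add, Complex.conj_ofReal]
  -- (2) the ω-contraction of the second integrand
  have h2 : ∑ i, ((ω i : ℝ) : ℂ) *
      ((Complex.I * db) * starRingEnd ℂ (Ehat k i) -
        bhat k i * starRingEnd ℂ (Complex.I * divC Ehat k)) =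
      -(((k ⬝ᵥ ω : ℝ) : ℂ) * ((Af ρr k : ℝ) : ℂ) * db) -
        Bw * (((Af ρr k : ℝ) : ℂ) + ((deriv ρr (enorm3 k) / enorm3 k : ℝ) : ℂ)) := by
    simp only [hconjE, hIdivE, hBw]
    simp only [dotProduct, Fin.sum_univ_three]
    push_cast
    linear_combination (db * ((Af ρr k : ℝ) : ℂ) *
      (((ω 0 : ℝ) : ℂ) * ((k 0 : ℝ) : ℂ) + ((ω 1 : ℝ) : ℂ) * ((k 1 : ℝ) : ℂ) +
        ((ω 2 : ℝ) : ℂ) * ((k 2 : ℝ) : ℂ))) * Complex.I_mul_I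
  rw [h1, h2, Gnice]
  simp only [divb, ← hdb, ← hBw, phi]
  have hrc : ((enorm3 k : ℝ) : ℂ) ≠ 0 := by
    exact_mod_cast hrne
  push_cast
  field_simp
  ring


lemma Vn_zero_of_large {ρr : ℝ → ℝ} {ω : Fin 3 → ℝ} {bhat : SchwartzMap (Fin 3 → ℝ) (Fin 3 → ℂ)}
    {n : ℕ} {y : Fin 3 → ℝ} (hy : (n : ℝ) + 2 ≤ q3 y) (j : Fin 3) :
    Vn ρr ω bhat n y j = 0 := by
  rw [Vn, scal, eta_zero_of_ge hy]
  push_cast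
  ring

lemma q3_ge_coord (y : Fin 3 → ℝ) (i : Fin 3) : y i ^ 2 ≤ q3 y :=
  Finset.single_le_sum (f := fun i => y i ^ 2) (fun j _ => sq_nonneg _) (Finset.mem_univ i)

lemma eta_comp_meas (n : ℕ) : Continuous (fun k => ((eta n (q3 k) : ℝ) : ℂ)) :=
  Complex.continuous_ofReal.comp ((eta_differentiable n).continuous.comp q3_continuous)

lemma integral_eta_Gnice {ρr : ℝ → ℝ} (hρ : ContDiffOn ℝ (⊤ : ℕ∞) ρr (Set.Ioi 0)) {ω : Fin 3 → ℝ}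
    {bhat : SchwartzMap (Fin 3 → ℝ) (Fin 3 → ℂ)}
    (hdiv : ∀ k : Fin 3 → ℝ, (fun i => (k i : ℂ)) ⬝ᵥ bhat k = 0)
    (hGint : Integrable (Gnice ρr ω bhat)) (n : ℕ) :
    ∫ k : Fin 3 → ℝ, ((eta n (q3 k) : ℝ) : ℂ) * Gnice ρr ω bhat k = 0 := by
  set c : ℝ := (n : ℝ) + 2 with hc
  have hc1 : (1 : ℝ) ≤ c := by
    rw [hc]
    have : (0:ℝ) ≤ (n:ℝ) := Nat.cast_nonneg n
    linarith
  set a : Fin 3 → ℝ := fun _ => -c with ha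
  set b : Fin 3 → ℝ := fun _ => c with hb
  have hle : a ≤ b := fun i => by simp [ha, hb]; linarith
  have hint : Integrable (fun k => ((eta n (q3 k) : ℝ) : ℂ) * Gnice ρr ω bhat k) := by
    apply hGint.bdd_mul (eta_comp_meas n).aestronglyMeasurable
    exact Filter.Eventually.of_forall fun k => by
      rw [Complex.norm_real, Real.norm_eq_abs, abs_of_nonneg (eta_nonneg n _)]
      exact eta_le_one n _
  -- large q3 vanishing
  have hvan : ∀ y : Fin 3 → ℝ, (∃ i, c ≤ |y i|) →
      ∀ j, Vn ρr ω bhat n y j = 0 := by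
    rintro y ⟨i, hi⟩ j
    apply Vn_zero_of_large _ j
    calc (n : ℝ) + 2 = c := rfl
    _ ≤ c ^ 2 := by nlinarith
    _ ≤ |y i| ^ 2 := by
        apply pow_le_pow_left₀ (by linarith) hi
    _ = y i ^ 2 := sq_abs _
    _ ≤ q3 y := q3_ge_coord y i
  have hdivEq : (fun x => ∑ i, (ContinuousLinearMap.pi fun i =>
      fderiv ℝ (fun y => Vn ρr ω bhat n y i) x) (Pi.single i 1) i) =
      fun x => ((eta n (q3 x) : ℝ) : ℂ) * Gnice ρr ω bhat x := by
    funext x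
    simp only [ContinuousLinearMap.pi_apply]
    exact Vn_div_eq hρ hdiv x
  have hHi : IntegrableOn (fun x => ∑ i, (ContinuousLinearMap.pi fun i =>
      fderiv ℝ (fun y => Vn ρr ω bhat n y i) x) (Pi.single i 1) i) (Set.Icc a b) := by
    rw [hdivEq]
    exact hint.integrableOn
  have key := integral_divergence_of_hasFDerivAt_off_countable (n := 2) a b hle
    (fun x i => Vn ρr ω bhat n x i)
    (fun x => ContinuousLinearMap.pi fun i => fderiv ℝ (fun y => Vn ρr ω bhat n y i) x)
    ∅ Set.countable_empty
    (continuousOn_pi.2 fun i => ((fun x => (Vn_differentiableAt hρ x i).continuousAt) :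
      ∀ x, ContinuousAt _ x) |> fun h => (continuous_iff_continuousAt.2 h).continuousOn)
    (fun x _ => hasFDerivAt_pi.2 fun i => (Vn_differentiableAt hρ x i).hasFDerivAt)
    hHi
  · -- conclude
    have hfaces : ∀ i : Fin 3,
        ((∫ x in Set.Icc (a ∘ i.succAbove) (b ∘ i.succAbove),
          Vn ρr ω bhat n (i.insertNth (b i) x) i) -
         ∫ x in Set.Icc (a ∘ i.succAbove) (b ∘ i.succAbove),
          Vn ρr ω bhat n (i.insertNth (a i) x) i) = 0 := by
      intro i
      have h1 : ∀ x : Fin 2 → ℝ, Vn ρr ω bhat n (i.insertNth (b i) x) i = 0 := fun x =>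
        hvan _ ⟨i, by simp [hb, Fin.insertNth_apply_same, abs_of_nonneg (by linarith : (0:ℝ) ≤ c)]⟩ i
      have h2 : ∀ x : Fin 2 → ℝ, Vn ρr ω bhat n (i.insertNth (a i) x) i = 0 := fun x =>
        hvan _ ⟨i, by simp [ha, Fin.insertNth_apply_same, abs_of_nonpos (by linarith : -c ≤ 0)]
          ⟩ i
      simp only [h1, h2, integral_zero, sub_zero]
    rw [hdivEq] at key
    rw [Finset.sum_congr rfl fun i _ => hfaces i, Finset.sum_const_zero] at key
    -- extend from the box to all of ℝ³
    rw [← key]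
    symm
    apply setIntegral_eq_integral_of_forall_compl_eq_zero
    intro x hx
    have : ∃ i, c ≤ |x i| := by
      by_contra hcon
      push_neg at hcon
      apply hx
      constructor
      · intro i
        have := hcon i
        rw [abs_lt] at this
        simp [ha]
        linarith [this.1]
      · intro i
        have := hcon i
        rw [abs_lt] at this
        simp [hb]
        linarith [this.2]
    obtain ⟨i, hi⟩ := this
    have heta : eta n (q3 x) = 0 := by
      apply eta_zero_of_ge
      calc (n : ℝ) + 2 = c := rfl
      _ ≤ c ^ 2 := by nlinarith
      _ ≤ |x i| ^ 2 := by apply pow_le_pow_left₀ (by linarith) hi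
      _ = x i ^ 2 := sq_abs _
      _ ≤ q3 x := q3_ge_coord x i
    rw [heta]
    push_cast
    ring

end Stmt7Aux

open Stmt7Aux Filter

/-- Second variational equation in Fourier space:
`∫ b̂·B̂ dk − ω · ∫ [(i∇·b̂) conj(Ê) − b̂ conj(i∇·Ê)] dk = 0` for the soliton fields
`Ê(k) = −ik ρ_r(r)/r²`, `B̂(k) = ρ_r'(r)((k·ω)k − r²ω)/r³` and any divergence-free
Schwartz field `b̂`. -/
theorem stmt7 (ρr : ℝ → ℝ) (hρ : ContDiffOn ℝ (⊤ : ℕ∞) ρr (Set.Ioi 0)) (ω : Fin 3 → ℝ)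
    (bhat : SchwartzMap (Fin 3 → ℝ) (Fin 3 → ℂ))
    (hdiv : ∀ k : Fin 3 → ℝ, (fun i => (k i : ℂ)) ⬝ᵥ bhat k = 0)
    (Ehat : (Fin 3 → ℝ) → (Fin 3 → ℂ))
    (hE : ∀ k i, Ehat k i = -Complex.I * (k i) * (ρr (enorm3 k)) / ((enorm3 k) ^ 2 : ℝ))
    (B : (Fin 3 → ℝ) → (Fin 3 → ℝ))
    (hB : ∀ k, B k = (deriv ρr (enorm3 k) / (enorm3 k) ^ 3) •
        ((k ⬝ᵥ ω) • k - ((enorm3 k) ^ 2) • ω))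
    (hint1 : Integrable (fun k => (bhat k) ⬝ᵥ (fun i => (B k i : ℂ))))
    (hint2 : Integrable (fun k => (fun i =>
        (Complex.I * divC (fun y => bhat y) k) * starRingEnd ℂ (Ehat k i) -
        bhat k i * starRingEnd ℂ (Complex.I * divC Ehat k) : Fin 3 → ℂ))) :
    (∫ k : Fin 3 → ℝ, (bhat k) ⬝ᵥ (fun i => (B k i : ℂ))) -
      (fun i => (ω i : ℂ)) ⬝ᵥ
        (∫ k : Fin 3 → ℝ, (fun i =>
          (Complex.I * divC (fun y => bhat y) k) * starRingEnd ℂ (Ehat k i) -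
          bhat k i * starRingEnd ℂ (Complex.I * divC Ehat k) : Fin 3 → ℂ)) = 0 := by
  classical
  set F := fun k => (fun i =>
      (Complex.I * divC (fun y => bhat y) k) * starRingEnd ℂ (Ehat k i) -
      bhat k i * starRingEnd ℂ (Complex.I * divC Ehat k) : Fin 3 → ℂ) with hF
  have hFi : ∀ i : Fin 3, Integrable (fun k => F k i) := fun i =>
    (ContinuousLinearMap.proj (R := ℂ) (φ := fun _ : Fin 3 => ℂ) i).integrable_comp hint2
  have hsum : Integrable (fun k => ∑ i, ((ω i : ℝ) : ℂ) * F k i) :=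
    integrable_finset_sum _ (fun i _ => (hFi i).const_mul _)
  have hproj : ∀ i : Fin 3, (∫ k, F k) i = ∫ k, F k i := by
    intro i
    have := (ContinuousLinearMap.proj (R := ℂ) (φ := fun _ : Fin 3 => ℂ)
      i).integral_comp_comm hint2
    simpa using this.symm
  have hdotint : (fun i => ((ω i : ℝ) : ℂ)) ⬝ᵥ (∫ k, F k) =
      ∫ k, ∑ i, ((ω i : ℝ) : ℂ) * F k i := by
    rw [dotProduct, integral_finset_sum _ (fun i _ => (hFi i).const_mul _)]
    refine Finset.sum_congr rfl fun i _ => ?_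
    rw [hproj i, ← MeasureTheory.integral_const_mul]
  rw [hdotint, ← integral_sub hint1 hsum]
  have h0vol : (volume : Measure (Fin 3 → ℝ)) {0} = 0 := by
    have h1 : ({(0 : Fin 3 → ℝ)} : Set (Fin 3 → ℝ)) =
        Set.pi Set.univ (fun _ : Fin 3 => ({0} : Set ℝ)) :=
      (Set.univ_pi_singleton (0 : Fin 3 → ℝ)).symm
    rw [h1, volume_pi_pi]
    simp
  have hae0 : ∀ᵐ (k : Fin 3 → ℝ), k ≠ 0 := by
    rw [ae_iff]
    convert h0vol using 2
    ext k
    simp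
  have hae : (fun k => ((bhat k) ⬝ᵥ (fun i => (B k i : ℂ))) -
      ∑ i, ((ω i : ℝ) : ℂ) * F k i) =ᵐ[volume] Gnice ρr ω bhat := by
    filter_upwards [hae0] with k hk
    simpa only [hF] using G_eq hρ hdiv hE hB hk
  rw [integral_congr_ae hae]
  have hGint : Integrable (Gnice ρr ω bhat) := (hint1.sub hsum).congr hae
  have hzero := integral_eta_Gnice hρ hdiv hGint
  have htends : Tendsto (fun n : ℕ => ∫ k, ((eta n (q3 k) : ℝ) : ℂ) * Gnice ρr ω bhat k)
      atTop (nhds (∫ k, Gnice ρr ω bhat k)) := by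
    apply tendsto_integral_of_dominated_convergence (fun k => ‖Gnice ρr ω bhat k‖)
    · intro n
      exact (eta_comp_meas n).aestronglyMeasurable.mul hGint.aestronglyMeasurable
    · exact hGint.norm
    · intro n
      filter_upwards with k
      rw [norm_mul, Complex.norm_real, Real.norm_eq_abs, abs_of_nonneg (eta_nonneg _ _)]
      exact mul_le_of_le_one_left (norm_nonneg _) (eta_le_one _ _)
    · filter_upwards [hae0] with k hk
      have hq := q3_pos hk
      apply Filter.Tendsto.congr' _ tendsto_const_nhds
      obtain ⟨N, hN⟩ := exists_nat_ge (max (q3 k) (q3 k)⁻¹)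
      rw [Filter.EventuallyEq, eventually_atTop]
      refine ⟨N, fun m hm => ?_⟩
      have hm' : (N : ℝ) ≤ m := Nat.cast_le.2 hm
      have h1 : q3 k ≤ (m : ℝ) + 1 :=
        le_trans (le_trans (le_max_left _ _) hN) (by linarith)
      have h2 : ((m : ℝ) + 1)⁻¹ ≤ q3 k := by
        rw [inv_le_comm₀ (by positivity) hq]
        exact le_trans (le_trans (le_max_right _ _) hN) (by linarith)
      rw [eta_one h2 h1]
      push_cast
      ring
  have hconst : (fun n : ℕ => ∫ k, ((eta n (q3 k) : ℝ) : ℂ) * Gnice ρr ω bhat k) =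
      fun _ => (0 : ℂ) := funext hzero
  rw [hconst] at htends
  exact tendsto_nhds_unique htends tendsto_const_nhds
end

section
/- Let ρ_r be a smooth radial profile with ρ_r'(r)/r of sufficient decay, and define the soliton fields in Fourier space Ê_ω(k) = −ik ρ_r(r)/r², B̂_ω(k) = ρ_r'(r)((k·ω)k − r²ω)/r³, r = |k|. Then the field part of the angular momentum satisfies ∫ x ∧ (E_ω(x) ∧ B_ω(x)) dx = (2/3) ω ∫ (ρ_r'(|k|))²/|k|² dk, so the total angular momentum of the soliton is M_ω = ω ( I + (2/3) ∫ (ρ_r')²/r² dk ) where I is the moment of inertia. -/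
open MeasureTheory Matrix

/-- Real divergence of a vector field on ℝ³. -/
noncomputable def divR (F : (Fin 3 → ℝ) → (Fin 3 → ℝ)) (k : Fin 3 → ℝ) : ℝ :=
  ∑ j, fderiv ℝ (fun y => F y j) k (Pi.single j 1)

lemma enorm3_nonneg (k : Fin 3 → ℝ) : 0 ≤ enorm3 k := Real.sqrt_nonneg _

lemma sq_enorm3 (k : Fin 3 → ℝ) : (enorm3 k) ^ 2 = ∑ i, k i ^ 2 :=
  Real.sq_sqrt (Finset.sum_nonneg fun i _ => sq_nonneg _)

lemma enorm3_eq_zero {k : Fin 3 → ℝ} (h : enorm3 k = 0) : k = 0 := by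
  have h2 : (∑ i, k i ^ 2) = 0 := by
    have := sq_enorm3 k; rw [h] at this; simpa using this.symm
  funext i
  have := (Finset.sum_eq_zero_iff_of_nonneg (fun i _ => sq_nonneg (k i))).1 h2 i (Finset.mem_univ i)
  simpa using pow_eq_zero_iff (n := 2) (by norm_num) |>.1 this

noncomputable def L3 (k : Fin 3 → ℝ) : (Fin 3 → ℝ) →L[ℝ] ℝ :=
  (enorm3 k)⁻¹ • ∑ i, k i • ContinuousLinearMap.proj i

lemma L3_apply (k : Fin 3 → ℝ) (j : Fin 3) : L3 k (Pi.single j 1) = k j / enorm3 k := by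
  have : ∀ i : Fin 3, k i • (ContinuousLinearMap.proj (R := ℝ) (φ := fun _ : Fin 3 => ℝ) i)
      (Pi.single j 1) = if i = j then k j else 0 := by
    intro i
    by_cases h : i = j <;> simp [Pi.single_apply, h]
  simp only [L3, ContinuousLinearMap.smul_apply, ContinuousLinearMap.sum_apply, this,
    Finset.sum_ite_eq', Finset.mem_univ, if_true, smul_eq_mul]
  rw [div_eq_inv_mul]

lemma hasFDerivAt_enorm3 (k : Fin 3 → ℝ) (hk : enorm3 k ≠ 0) :
    HasFDerivAt enorm3 (L3 k) k := by
  have hs : HasFDerivAt (fun y : Fin 3 → ℝ => ∑ i, y i ^ 2)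
      (∑ i, (2 * k i) • ContinuousLinearMap.proj (R := ℝ) (φ := fun _ : Fin 3 => ℝ) i) k := by
    apply HasFDerivAt.fun_sum
    intro i _
    have h1 := (ContinuousLinearMap.proj (R := ℝ) (φ := fun _ : Fin 3 => ℝ) i).hasFDerivAt (x := k)
    have h2 := h1.fun_mul h1
    have : (fun y : Fin 3 → ℝ => y i ^ 2) = fun y => y i * y i := by funext y; ring
    rw [this]
    refine h2.congr_fderiv ?_
    ext v
    simp only [ContinuousLinearMap.smul_apply, ContinuousLinearMap.add_apply,
      ContinuousLinearMap.proj_apply, smul_eq_mul]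
    ring
  have hsne : (∑ i, k i ^ 2) ≠ 0 := by
    intro h0; apply hk; simp [enorm3, h0]
  have hsq := (Real.hasDerivAt_sqrt hsne).comp_hasFDerivAt k hs
  have heq : ((1 / (2 * Real.sqrt (∑ i, k i ^ 2))) •
      ∑ i, (2 * k i) • ContinuousLinearMap.proj (R := ℝ) (φ := fun _ : Fin 3 => ℝ) i) = L3 k := by
    ext v
    simp only [L3, ContinuousLinearMap.smul_apply, ContinuousLinearMap.sum_apply,
      ContinuousLinearMap.smul_apply, ContinuousLinearMap.proj_apply, smul_eq_mul]
    rw [Finset.mul_sum, Finset.mul_sum]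
    refine Finset.sum_congr rfl fun i _ => ?_
    have : enorm3 k = Real.sqrt (∑ i, k i ^ 2) := rfl
    rw [← this]
    field_simp
  rw [heq] at hsq
  exact hsq

section
variable (ρr : ℝ → ℝ)

lemma divC_conj_Ehat (hρ : ContDiffOn ℝ (⊤ : ℕ∞) ρr (Set.Ioi 0))
    (Ehat : (Fin 3 → ℝ) → (Fin 3 → ℂ))
    (hE : ∀ k i, Ehat k i = -Complex.I * (k i) * (ρr (enorm3 k)) / ((enorm3 k) ^ 2 : ℝ))
    (k : Fin 3 → ℝ) (hk : enorm3 k ≠ 0) :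
    divC (fun y j => starRingEnd ℂ (Ehat y j)) k =
      Complex.I * ((ρr (enorm3 k) / (enorm3 k) ^ 2 + deriv ρr (enorm3 k) / enorm3 k : ℝ) : ℂ) := by
  set r := enorm3 k with hrdef
  have hr : 0 < r := lt_of_le_of_ne (enorm3_nonneg k) (Ne.symm hk)
  have hmem : Set.Ioi (0:ℝ) ∈ nhds r := Ioi_mem_nhds hr
  have hρ1 : HasDerivAt ρr (deriv ρr r) r :=
    ((hρ.contDiffAt hmem).differentiableAt (by simp)).hasDerivAt
  have hfun : ∀ j, (fun y => starRingEnd ℂ (Ehat y j)) =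
      fun y => (↑(y j * (ρr (enorm3 y) / (enorm3 y) ^ 2)) : ℂ) * Complex.I := by
    intro j
    funext y
    rw [hE]
    push_cast
    simp only [map_div₀, _root_.map_mul, map_neg, map_pow, Complex.conj_I, Complex.conj_ofReal]
    ring
  set q : ℝ := deriv ρr r / r ^ 2 - 2 * ρr r / r ^ 3 with hqdef
  have hq : HasDerivAt (fun t => ρr t / t ^ 2) q r := by
    have h := hρ1.fun_div (hasDerivAt_pow 2 r) (by positivity)
    refine h.congr_deriv ?_
    rw [hqdef]
    field_simp
    ring
  have hcomp : HasFDerivAt (fun y => ρr (enorm3 y) / (enorm3 y) ^ 2) (q • L3 k) k :=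
    by have := hq.comp_hasFDerivAt k (hasFDerivAt_enorm3 k hk); exact this
  have hpart : ∀ j : Fin 3, fderiv ℝ (fun y => starRingEnd ℂ (Ehat y j)) k (Pi.single j 1) =
      (↑(k j * (q * (k j / r)) + ρr r / r ^ 2) : ℂ) * Complex.I := by
    intro j
    rw [hfun j]
    have hproj := (ContinuousLinearMap.proj (R := ℝ) (φ := fun _ : Fin 3 => ℝ) j).hasFDerivAt (x := k)
    have hA : HasFDerivAt (fun y : Fin 3 → ℝ => y j * (ρr (enorm3 y) / (enorm3 y) ^ 2))
        ((k j) • (q • L3 k) + (ρr r / r ^ 2) • ContinuousLinearMap.proj j) k := hproj.mul hcomp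
    have h2 := (Complex.ofRealCLM.hasFDerivAt.comp k hA).mul_const Complex.I
    simp only [Function.comp_def, Complex.ofRealCLM_apply] at h2
    rw [h2.fderiv]
    simp only [ContinuousLinearMap.smul_apply, ContinuousLinearMap.comp_apply,
      ContinuousLinearMap.add_apply, ContinuousLinearMap.smul_apply, L3_apply,
      ContinuousLinearMap.proj_apply, Pi.single_eq_same, smul_eq_mul,
      Complex.ofRealCLM_apply]
    push_cast
    ring
  rw [divC, Fin.sum_univ_three, hpart 0, hpart 1, hpart 2]
  have hsum : k 0 ^ 2 + k 1 ^ 2 + k 2 ^ 2 = r ^ 2 := by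
    rw [hrdef, sq_enorm3 k, Fin.sum_univ_three]
  have hrne : r ≠ 0 := ne_of_gt hr
  have key : (k 0 * (q * (k 0 / r)) + ρr r / r ^ 2)
      + (k 1 * (q * (k 1 / r)) + ρr r / r ^ 2)
      + (k 2 * (q * (k 2 / r)) + ρr r / r ^ 2)
      = ρr r / r ^ 2 + deriv ρr r / r := by
    have expand : (k 0 * (q * (k 0 / r)) + ρr r / r ^ 2)
        + (k 1 * (q * (k 1 / r)) + ρr r / r ^ 2)
        + (k 2 * (q * (k 2 / r)) + ρr r / r ^ 2)
        = (k 0 ^ 2 + k 1 ^ 2 + k 2 ^ 2) * (q * r⁻¹) + 3 * (ρr r / r ^ 2) := by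
      field_simp; ring
    rw [expand, hsum, hqdef]
    field_simp
    ring
  rw [← key]
  push_cast
  ring
end

section
variable (ρr : ℝ → ℝ)

lemma divR_B (hρ : ContDiffOn ℝ (⊤ : ℕ∞) ρr (Set.Ioi 0)) (ω : Fin 3 → ℝ)
    (B : (Fin 3 → ℝ) → (Fin 3 → ℝ))
    (hB : ∀ k, B k = (deriv ρr (enorm3 k) / (enorm3 k) ^ 3) •
        ((k ⬝ᵥ ω) • k - ((enorm3 k) ^ 2) • ω))
    (k : Fin 3 → ℝ) (hk : enorm3 k ≠ 0) :
    divR B k = 2 * deriv ρr (enorm3 k) * (k ⬝ᵥ ω) / (enorm3 k) ^ 3 := by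
  set r := enorm3 k with hrdef
  have hr : 0 < r := lt_of_le_of_ne (enorm3_nonneg k) (Ne.symm hk)
  have hrne : r ≠ 0 := ne_of_gt hr
  have hmem : Set.Ioi (0:ℝ) ∈ nhds r := Ioi_mem_nhds hr
  have hρ' : ContDiffOn ℝ (⊤ : ℕ∞) (deriv ρr) (Set.Ioi 0) :=
    hρ.deriv_of_isOpen isOpen_Ioi (by simp)
  have hρ2 : HasDerivAt (deriv ρr) (deriv (deriv ρr) r) r :=
    ((hρ'.contDiffAt hmem).differentiableAt (by simp)).hasDerivAt
  have hL3 := hasFDerivAt_enorm3 k hk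
  -- the scalar factor c
  set c' : ℝ := deriv (deriv ρr) r / r ^ 3 - 3 * deriv ρr r / r ^ 4 with hc'def
  have hcder : HasDerivAt (fun t => deriv ρr t / t ^ 3) c' r := by
    have h := hρ2.fun_div (hasDerivAt_pow 3 r) (by positivity)
    refine h.congr_deriv ?_
    rw [hc'def]; field_simp; ring
  have hc : HasFDerivAt (fun y => deriv ρr (enorm3 y) / (enorm3 y) ^ 3) (c' • L3 k) k :=
    by have := hcder.comp_hasFDerivAt k hL3; exact this
  -- dot product
  have hdotfun : (fun y : Fin 3 → ℝ => y ⬝ᵥ ω) = fun y => ∑ i, y i * ω i := rfl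
  have hW : HasFDerivAt (fun y : Fin 3 → ℝ => y ⬝ᵥ ω)
      (∑ i, ω i • ContinuousLinearMap.proj (R := ℝ) (φ := fun _ : Fin 3 => ℝ) i) k := by
    rw [hdotfun]
    apply HasFDerivAt.fun_sum
    intro i _
    have h := ((ContinuousLinearMap.proj (R := ℝ) (φ := fun _ : Fin 3 => ℝ) i).hasFDerivAt
      (x := k)).mul_const (ω i)
    exact h
  have hWapp : ∀ j : Fin 3, (∑ i, ω i • ContinuousLinearMap.proj (R := ℝ)
      (φ := fun _ : Fin 3 => ℝ) i) (Pi.single j 1) = ω j := by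
    intro j
    have : ∀ i : Fin 3, ω i • (ContinuousLinearMap.proj (R := ℝ) (φ := fun _ : Fin 3 => ℝ) i)
        (Pi.single j 1) = if i = j then ω j else 0 := by
      intro i; by_cases h : i = j <;> simp [Pi.single_apply, h]
    simp only [ContinuousLinearMap.sum_apply, ContinuousLinearMap.smul_apply, smul_eq_mul]
    simp only [show ∀ i : Fin 3, ω i * (ContinuousLinearMap.proj (R := ℝ) (φ := fun _ : Fin 3 => ℝ) i) (Pi.single j 1) = if i = j then ω j else 0 from fun i => by by_cases h : i = j <;> simp [Pi.single_apply, h],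
      Finset.sum_ite_eq', Finset.mem_univ, if_true]
  -- square of norm
  have hsqfun : (fun y : Fin 3 → ℝ => (enorm3 y) ^ 2) = fun y => enorm3 y * enorm3 y := by
    funext y; ring
  have hsq : HasFDerivAt (fun y : Fin 3 → ℝ => (enorm3 y) ^ 2) (r • L3 k + r • L3 k) k := by
    rw [hsqfun]; exact hL3.mul hL3
  -- B components
  have hBfun : ∀ j, (fun y => B y j) = fun y => (deriv ρr (enorm3 y) / (enorm3 y) ^ 3) *
      ((y ⬝ᵥ ω) * y j - (enorm3 y) ^ 2 * ω j) := by
    intro j; funext y; rw [hB y]; simp [mul_sub]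
  have hpart : ∀ j : Fin 3, fderiv ℝ (fun y => B y j) k (Pi.single j 1) =
      (deriv ρr r / r ^ 3) * ((k ⬝ᵥ ω) + k j * ω j - ω j * (2 * k j)) +
      ((k ⬝ᵥ ω) * k j - r ^ 2 * ω j) * (c' * (k j / r)) := by
    intro j
    rw [hBfun j]
    have hproj := (ContinuousLinearMap.proj (R := ℝ) (φ := fun _ : Fin 3 => ℝ) j).hasFDerivAt (x := k)
    have hd1 : HasFDerivAt (fun y : Fin 3 → ℝ => (y ⬝ᵥ ω) * y j)
        ((k ⬝ᵥ ω) • ContinuousLinearMap.proj j + (k j) • (∑ i, ω i • ContinuousLinearMap.proj i)) k :=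
      hW.mul hproj
    have hd2 : HasFDerivAt (fun y : Fin 3 → ℝ => (enorm3 y) ^ 2 * ω j)
        ((ω j) • (r • L3 k + r • L3 k)) k := by
      have := hsq.mul_const (ω j)
      convert this using 1
    have hd := hd1.fun_sub hd2
    have hfull := hc.fun_mul hd
    rw [hfull.fderiv]
    simp only [ContinuousLinearMap.add_apply, ContinuousLinearMap.smul_apply,
      ContinuousLinearMap.sub_apply, ContinuousLinearMap.coe_sub', Pi.sub_apply,
      L3_apply, ContinuousLinearMap.proj_apply, Pi.single_eq_same, smul_eq_mul, mul_one, hWapp]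
    simp only [← hrdef]
    rw [show r * (k j / r) + r * (k j / r) = 2 * k j by field_simp; ring]
  rw [divR, Fin.sum_univ_three, hpart 0, hpart 1, hpart 2]
  have hsum : k 0 ^ 2 + k 1 ^ 2 + k 2 ^ 2 = r ^ 2 := by
    rw [hrdef, sq_enorm3 k, Fin.sum_univ_three]
  have hdot : k ⬝ᵥ ω = k 0 * ω 0 + k 1 * ω 1 + k 2 * ω 2 := by
    show (∑ i, k i * ω i) = _
    rw [Fin.sum_univ_three]
  have expand : (deriv ρr r / r ^ 3 * (k ⬝ᵥ ω + k 0 * ω 0 - ω 0 * (2 * k 0)) +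
        (k ⬝ᵥ ω * k 0 - r ^ 2 * ω 0) * (c' * (k 0 / r))) +
      (deriv ρr r / r ^ 3 * (k ⬝ᵥ ω + k 1 * ω 1 - ω 1 * (2 * k 1)) +
        (k ⬝ᵥ ω * k 1 - r ^ 2 * ω 1) * (c' * (k 1 / r))) +
      (deriv ρr r / r ^ 3 * (k ⬝ᵥ ω + k 2 * ω 2 - ω 2 * (2 * k 2)) +
        (k ⬝ᵥ ω * k 2 - r ^ 2 * ω 2) * (c' * (k 2 / r))) =
      deriv ρr r / r ^ 3 * (3 * (k ⬝ᵥ ω) - (k 0 * ω 0 + k 1 * ω 1 + k 2 * ω 2)) +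
      (c' / r) * ((k ⬝ᵥ ω) * (k 0 ^ 2 + k 1 ^ 2 + k 2 ^ 2) -
        r ^ 2 * (k 0 * ω 0 + k 1 * ω 1 + k 2 * ω 2)) := by
    field_simp
    ring
  rw [expand, hsum, ← hdot]
  field_simp
  ring
end

section
variable (ρr : ℝ → ℝ) (ω : Fin 3 → ℝ)

noncomputable def Gf (k : Fin 3 → ℝ) : ℝ :=
  -3 * ρr (enorm3 k) * deriv ρr (enorm3 k) / (enorm3 k) ^ 5 -
    (deriv ρr (enorm3 k)) ^ 2 / (enorm3 k) ^ 4

noncomputable def Hf (k : Fin 3 → ℝ) : ℝ :=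
  ρr (enorm3 k) * deriv ρr (enorm3 k) / (enorm3 k) ^ 3

noncomputable def Pf (k : Fin 3 → ℝ) : ℝ :=
  (deriv ρr (enorm3 k)) ^ 2 / (enorm3 k) ^ 2

lemma pointwise_eq (hρ : ContDiffOn ℝ (⊤ : ℕ∞) ρr (Set.Ioi 0))
    (Ehat : (Fin 3 → ℝ) → (Fin 3 → ℂ))
    (hE : ∀ k i, Ehat k i = -Complex.I * (k i) * (ρr (enorm3 k)) / ((enorm3 k) ^ 2 : ℝ))
    (B : (Fin 3 → ℝ) → (Fin 3 → ℝ))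
    (hB : ∀ k, B k = (deriv ρr (enorm3 k) / (enorm3 k) ^ 3) •
        ((k ⬝ᵥ ω) • k - ((enorm3 k) ^ 2) • ω))
    (k : Fin 3 → ℝ) (hk : enorm3 k ≠ 0) (i : Fin 3) :
    Complex.I * ((divR B k : ℂ) * starRingEnd ℂ (Ehat k i) +
        divC (fun y j => starRingEnd ℂ (Ehat y j)) k * (B k i : ℂ)) =
      ((Gf ρr k * ((k ⬝ᵥ ω) * k i) + Hf ρr k * ω i + Pf ρr k * ω i : ℝ) : ℂ) := by
  set r := enorm3 k with hrdef
  have hr : 0 < r := lt_of_le_of_ne (enorm3_nonneg k) (Ne.symm hk)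
  have hrne : r ≠ 0 := ne_of_gt hr
  have hBi : B k i = (deriv ρr r / r ^ 3) * ((k ⬝ᵥ ω) * k i - r ^ 2 * ω i) := by
    rw [hB]; simp [mul_sub]; rfl
  have hconj : starRingEnd ℂ (Ehat k i) = Complex.I * ((k i * ρr r / r ^ 2 : ℝ) : ℂ) := by
    rw [hE]
    push_cast
    simp only [map_div₀, _root_.map_mul, map_neg, map_pow, Complex.conj_I, Complex.conj_ofReal]
    ring
  have mulI : ∀ a b c : ℝ, Complex.I * ((a : ℂ) * (Complex.I * (b : ℂ)) +
      Complex.I * (c : ℂ)) = ((-(a * b + c) : ℝ) : ℂ) := by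
    intro a b c
    push_cast
    ring_nf
    simp only [Complex.I_sq]
    ring
  rw [divR_B ρr hρ ω B hB k hk, divC_conj_Ehat ρr hρ Ehat hE k hk, hconj, hBi]
  rw [show (Complex.I * ((ρr r / r ^ 2 + deriv ρr r / r : ℝ) : ℂ)) *
      ((deriv ρr r / r ^ 3 * ((k ⬝ᵥ ω) * k i - r ^ 2 * ω i) : ℝ) : ℂ) =
      Complex.I * (((ρr r / r ^ 2 + deriv ρr r / r) *
        (deriv ρr r / r ^ 3 * ((k ⬝ᵥ ω) * k i - r ^ 2 * ω i)) : ℝ) : ℂ) by push_cast; ring]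
  rw [mulI]
  rw [Complex.ofReal_inj]
  rw [Gf, Hf, Pf, ← hrdef]
  field_simp
  ring
end

lemma mp_piCongrRight (e : Fin 3 → (ℝ ≃ᵐ ℝ))
    (he : ∀ i, MeasurePreserving (e i) volume volume) :
    MeasurePreserving (MeasurableEquiv.piCongrRight e) volume volume := by
  constructor
  · exact (MeasurableEquiv.piCongrRight e).measurable
  · rw [show (volume : Measure (Fin 3 → ℝ)) = Measure.pi fun _ => volume from rfl]
    refine (Measure.pi_eq fun s hs => ?_).symm
    rw [Measure.map_apply (MeasurableEquiv.piCongrRight e).measurable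
      (MeasurableSet.univ_pi hs)]
    have hpre : (MeasurableEquiv.piCongrRight e) ⁻¹' (Set.univ.pi s) =
        Set.univ.pi fun i => (e i) ⁻¹' (s i) := by
      ext x
      simp [MeasurableEquiv.piCongrRight, Equiv.piCongrRight]
    rw [hpre, Measure.pi_pi]
    exact Finset.prod_congr rfl fun i _ => (he i).measure_preimage (hs i).nullMeasurableSet

/-- flip of coordinate m -/
noncomputable def flipE (m : Fin 3) : (Fin 3 → ℝ) ≃ᵐ (Fin 3 → ℝ) :=
  MeasurableEquiv.piCongrRight (fun j => if j = m then MeasurableEquiv.neg ℝ else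
    MeasurableEquiv.refl ℝ)

lemma flipE_apply (m : Fin 3) (k : Fin 3 → ℝ) (j : Fin 3) :
    flipE m k j = if j = m then -k j else k j := by
  by_cases h : j = m <;>
    simp [flipE, MeasurableEquiv.piCongrRight, Equiv.piCongrRight, h]

lemma mp_flipE (m : Fin 3) : MeasurePreserving (flipE m) volume volume := by
  apply mp_piCongrRight
  intro i
  by_cases h : i = m <;> simp [h]
  · exact Measure.measurePreserving_neg volume
  · exact MeasurePreserving.id volume

lemma enorm3_flipE (m : Fin 3) (k : Fin 3 → ℝ) : enorm3 (flipE m k) = enorm3 k := by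
  unfold enorm3
  congr 1
  refine Finset.sum_congr rfl fun i _ => ?_
  rw [flipE_apply]
  by_cases h : i = m <;> simp [h]

/-- swap of two coordinates as a measurable equiv on Fin 3 → ℝ -/
noncomputable def swapE (a b : Fin 3) : (Fin 3 → ℝ) ≃ᵐ (Fin 3 → ℝ) :=
  MeasurableEquiv.piCongrLeft (fun _ => ℝ) (Equiv.swap a b)

lemma swapE_apply (a b : Fin 3) (k : Fin 3 → ℝ) (j : Fin 3) :
    swapE a b k j = k (Equiv.swap a b j) := by
  simp [swapE, MeasurableEquiv.piCongrLeft, Equiv.piCongrLeft, Equiv.piCongrLeft',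
    Equiv.symm_symm]
  exact eq_rec_constant _ _

lemma mp_swapE (a b : Fin 3) : MeasurePreserving (swapE a b) volume volume :=
  volume_measurePreserving_piCongrLeft (fun _ => ℝ) (Equiv.swap a b)

lemma enorm3_swapE (a b : Fin 3) (k : Fin 3 → ℝ) : enorm3 (swapE a b k) = enorm3 k := by
  unfold enorm3
  congr 1
  rw [show ∑ i, swapE a b k i ^ 2 = ∑ i, k (Equiv.swap a b i) ^ 2 from
    Finset.sum_congr rfl fun i _ => by rw [swapE_apply]]
  exact Equiv.sum_comp (Equiv.swap a b) (fun i => k i ^ 2)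

lemma integral_avg {T : (Fin 3 → ℝ) ≃ᵐ (Fin 3 → ℝ)} (hT : MeasurePreserving T volume volume)
    {f g : (Fin 3 → ℝ) → ℝ} (hf : Integrable f) (hg : ∀ k, g k = (f k + f (T k)) / 2) :
    Integrable g ∧ ∫ k, g k = ∫ k, f k := by
  have hcomp : Integrable (f ∘ T) :=
    (hT.integrable_comp_emb T.measurableEmbedding).2 hf
  have hgeq : g = fun k => (f k + (f ∘ T) k) / 2 := funext fun k => hg k
  have hgint : Integrable g := by
    rw [hgeq]; exact (hf.add hcomp).div_const 2
  refine ⟨hgint, ?_⟩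
  rw [hgeq]
  rw [integral_div, integral_add hf hcomp]
  have : ∫ k, (f ∘ T) k = ∫ k, f k := hT.integral_comp T.measurableEmbedding f
  rw [this]
  ring

lemma integral_core_aux (G H P : (Fin 3 → ℝ) → ℝ) (ω : Fin 3 → ℝ)
    (i m1 m2 : Fin 3) (h1 : m1 ≠ i) (h2 : m2 ≠ i) (h12 : m1 ≠ m2)
    (hGf : ∀ m k, G (flipE m k) = G k) (hHf : ∀ m k, H (flipE m k) = H k)
    (hGs : ∀ a b k, G (swapE a b k) = G k) (hHs : ∀ a b k, H (swapE a b k) = H k)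
    (hcover : ∀ k : Fin 3 → ℝ, k ⬝ᵥ ω = k i * ω i + k m1 * ω m1 + k m2 * ω m2)
    (hcover2 : ∀ k : Fin 3 → ℝ, (∑ j, k j ^ 2) = k i ^ 2 + k m1 ^ 2 + k m2 ^ 2)
    (htrace : ∀ k, G k * (∑ j, k j ^ 2) + 3 * H k = -P k)
    (hint : Integrable (fun k => G k * ((k ⬝ᵥ ω) * k i) + H k * ω i))
    (hP : Integrable P) :
    ∫ k, (G k * ((k ⬝ᵥ ω) * k i) + H k * ω i) = -(1/3) * (∫ k, P k) * ω i := by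
  -- first flip : m1
  have hflip1 : ∀ k : Fin 3 → ℝ,
      (G k * (((k i * ω i + k m1 * ω m1 + k m2 * ω m2) - k m1 * ω m1) * k i) + H k * ω i)
      = ((G k * ((k ⬝ᵥ ω) * k i) + H k * ω i) +
         (G (flipE m1 k) * (((flipE m1 k) ⬝ᵥ ω) * (flipE m1 k) i) + H (flipE m1 k) * ω i)) / 2 := by
    intro k
    rw [hGf, hHf, hcover (flipE m1 k), hcover k]
    simp only [flipE_apply, if_neg h1.symm, if_neg h2.symm, if_neg h12,
      if_neg (show ¬m2 = m1 from fun h => h12 h.symm), eq_self_iff_true, if_true]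
    ring
  obtain ⟨hint1, heq1⟩ := integral_avg (mp_flipE m1) hint (fun k => (hflip1 k))
  -- second flip : m2
  have hflip2 : ∀ k : Fin 3 → ℝ,
      (G k * ((k i * ω i) * k i) + H k * ω i)
      = (((fun k => G k * (((k i * ω i + k m1 * ω m1 + k m2 * ω m2) - k m1 * ω m1) * k i) + H k * ω i) k) +
         ((fun k => G k * (((k i * ω i + k m1 * ω m1 + k m2 * ω m2) - k m1 * ω m1) * k i) + H k * ω i) (flipE m2 k))) / 2 := by
    intro k
    simp only []
    rw [hGf, hHf]
    simp only [flipE_apply, if_neg h1.symm, if_neg h2.symm, if_neg h12,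
      if_neg (show ¬m1 = m2 from h12), eq_self_iff_true, if_true]
    ring
  obtain ⟨hint2, heq2⟩ := integral_avg (mp_flipE m2) hint1 (fun k => hflip2 k)
  rw [← heq1, ← heq2]
  -- now the integrand is ω i * (G k * k i ^ 2 + H k)
  have hform : (fun k : Fin 3 → ℝ => G k * ((k i * ω i) * k i) + H k * ω i)
      = fun k => ω i * (G k * k i ^ 2 + H k) := by
    funext k; ring
  rw [hform] at hint2 ⊢
  by_cases hωi : ω i = 0
  · simp [hωi]
  -- q_a := G k * k a ^ 2 + H k
  have hq_int : Integrable (fun k => G k * k i ^ 2 + H k) := by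
    have := hint2.const_mul (ω i)⁻¹
    have heq : (fun k => (ω i)⁻¹ * (ω i * (G k * k i ^ 2 + H k)))
        = fun k => G k * k i ^ 2 + H k := by
      funext k; field_simp
    rwa [heq] at this
  have hq_swap : ∀ a : Fin 3, Integrable (fun k => G k * k a ^ 2 + H k) ∧
      ∫ k, (G k * k a ^ 2 + H k) = ∫ k, (G k * k i ^ 2 + H k) := by
    intro a
    have hcompeq : (fun k => G k * k i ^ 2 + H k) ∘ (swapE i a)
        = fun k => G k * k a ^ 2 + H k := by
      funext k
      simp only [Function.comp_apply]
      rw [hGs, hHs, swapE_apply]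
      simp [Equiv.swap_apply_left]
    constructor
    · have := ((mp_swapE i a).integrable_comp_emb (swapE i a).measurableEmbedding).2 hq_int
      rwa [hcompeq] at this
    · rw [show (fun k : Fin 3 → ℝ => G k * k a ^ 2 + H k) = (fun k => G k * k i ^ 2 + H k) ∘ (swapE i a) from hcompeq.symm]
      exact (mp_swapE i a).integral_comp (swapE i a).measurableEmbedding
        (fun k => G k * k i ^ 2 + H k)
  have hkey : ∀ k : Fin 3 → ℝ, (G k * k i ^ 2 + H k) + (G k * k m1 ^ 2 + H k) +
      (G k * k m2 ^ 2 + H k) = -P k := by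
    intro k
    rw [← htrace k, hcover2 k]
    ring
  have hsum_int : ∫ k, ((G k * k i ^ 2 + H k) + (G k * k m1 ^ 2 + H k) + (G k * k m2 ^ 2 + H k))
      = (∫ k, (G k * k i ^ 2 + H k)) + (∫ k, (G k * k m1 ^ 2 + H k)) +
        (∫ k, (G k * k m2 ^ 2 + H k)) := by
    have hadd1 : Integrable (fun k : Fin 3 → ℝ =>
        (G k * k i ^ 2 + H k) + (G k * k m1 ^ 2 + H k)) := hq_int.add (hq_swap m1).1
    rw [integral_add hadd1 (hq_swap m2).1, integral_add hq_int (hq_swap m1).1]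
  have hsumP : ∫ k, ((G k * k i ^ 2 + H k) + (G k * k m1 ^ 2 + H k) + (G k * k m2 ^ 2 + H k))
      = -∫ k, P k := by
    rw [show (fun k : Fin 3 → ℝ => (G k * k i ^ 2 + H k) + (G k * k m1 ^ 2 + H k) +
      (G k * k m2 ^ 2 + H k)) = fun k => -P k from funext hkey]
    exact integral_neg P
  have h3q : (3 : ℝ) * ∫ k, (G k * k i ^ 2 + H k) = -∫ k, P k := by
    rw [← hsumP, hsum_int, (hq_swap m1).2, (hq_swap m2).2]
    ring
  rw [integral_const_mul]
  have hqval : ∫ k, (G k * k i ^ 2 + H k) = -(1/3) * ∫ k, P k := by linarith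
  rw [hqval]
  ring

lemma integral_core (G H P : (Fin 3 → ℝ) → ℝ) (ω : Fin 3 → ℝ) (i : Fin 3)
    (hGf : ∀ m k, G (flipE m k) = G k) (hHf : ∀ m k, H (flipE m k) = H k)
    (hGs : ∀ a b k, G (swapE a b k) = G k) (hHs : ∀ a b k, H (swapE a b k) = H k)
    (htrace : ∀ k, G k * (∑ j, k j ^ 2) + 3 * H k = -P k)
    (hint : Integrable (fun k => G k * ((k ⬝ᵥ ω) * k i) + H k * ω i))
    (hP : Integrable P) :
    ∫ k, (G k * ((k ⬝ᵥ ω) * k i) + H k * ω i) = -(1/3) * (∫ k, P k) * ω i := by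
  fin_cases i
  · exact integral_core_aux G H P ω 0 1 2 (by decide) (by decide) (by decide) hGf hHf hGs hHs
      (fun k => by simp [dotProduct, Fin.sum_univ_three]) 
      (fun k => by simp [Fin.sum_univ_three]) htrace hint hP
  · exact integral_core_aux G H P ω 1 0 2 (by decide) (by decide) (by decide) hGf hHf hGs hHs
      (fun k => by simp [dotProduct, Fin.sum_univ_three]; ring)
      (fun k => by simp [Fin.sum_univ_three]; ring) htrace hint hP
  · exact integral_core_aux G H P ω 2 0 1 (by decide) (by decide) (by decide) hGf hHf hGs hHs
      (fun k => by simp [dotProduct, Fin.sum_univ_three]; ring)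
      (fun k => by simp [Fin.sum_univ_three]; ring) htrace hint hP

/-- The field part of the angular momentum of the soliton, computed in Fourier
space as `i∫[(∇_k·B̂)conj(Ê) + B̂(∇_k·conj(Ê))]dk`, equals
`(2/3)ω∫(ρ_r')²/r² dk`, so the total angular momentum is
`M_ω = ω(I + (2/3)∫(ρ_r')²/r² dk)`. -/
theorem stmt10 (ρr : ℝ → ℝ) (hρ : ContDiffOn ℝ (⊤ : ℕ∞) ρr (Set.Ioi 0)) (ω : Fin 3 → ℝ)
    (Iner : ℝ)
    (Ehat : (Fin 3 → ℝ) → (Fin 3 → ℂ))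
    (hE : ∀ k i, Ehat k i = -Complex.I * (k i) * (ρr (enorm3 k)) / ((enorm3 k) ^ 2 : ℝ))
    (B : (Fin 3 → ℝ) → (Fin 3 → ℝ))
    (hB : ∀ k, B k = (deriv ρr (enorm3 k) / (enorm3 k) ^ 3) •
        ((k ⬝ᵥ ω) • k - ((enorm3 k) ^ 2) • ω))
    (hint1 : Integrable (fun k => (fun i =>
        Complex.I * ((divR B k : ℂ) * starRingEnd ℂ (Ehat k i) +
          divC (fun y j => starRingEnd ℂ (Ehat y j)) k * (B k i : ℂ)) : Fin 3 → ℂ)))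
    (hint2 : Integrable (fun k => (deriv ρr (enorm3 k)) ^ 2 / (enorm3 k) ^ 2)) :
    (∫ k : Fin 3 → ℝ, (fun i =>
        Complex.I * ((divR B k : ℂ) * starRingEnd ℂ (Ehat k i) +
          divC (fun y j => starRingEnd ℂ (Ehat y j)) k * (B k i : ℂ)) : Fin 3 → ℂ)) =
      (fun i => ((((2 : ℝ) / 3) *
        ∫ k : Fin 3 → ℝ, (deriv ρr (enorm3 k)) ^ 2 / (enorm3 k) ^ 2) * ω i : ℂ))
    ∧
    (fun i => ((Iner * ω i : ℝ) : ℂ)) +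
      (∫ k : Fin 3 → ℝ, (fun i =>
        Complex.I * ((divR B k : ℂ) * starRingEnd ℂ (Ehat k i) +
          divC (fun y j => starRingEnd ℂ (Ehat y j)) k * (B k i : ℂ)) : Fin 3 → ℂ)) =
      (fun i => (((Iner + ((2 : ℝ) / 3) *
        ∫ k : Fin 3 → ℝ, (deriv ρr (enorm3 k)) ^ 2 / (enorm3 k) ^ 2) * ω i : ℝ) : ℂ)) := by
  set Φ : (Fin 3 → ℝ) → (Fin 3 → ℂ) := fun k => (fun i =>
      Complex.I * ((divR B k : ℂ) * starRingEnd ℂ (Ehat k i) +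
        divC (fun y j => starRingEnd ℂ (Ehat y j)) k * (B k i : ℂ))) with hΦdef
  have hPeq : (fun k => (deriv ρr (enorm3 k)) ^ 2 / (enorm3 k) ^ 2) = Pf ρr := rfl
  have hPint : Integrable (Pf ρr) := by rw [← hPeq]; exact hint2
  -- a.e. nonvanishing of enorm3
  have hnull : ∀ᵐ k : Fin 3 → ℝ, enorm3 k ≠ 0 := by
    have hsub : {k : Fin 3 → ℝ | ¬ enorm3 k ≠ 0} ⊆ {(0 : Fin 3 → ℝ)} := by
      intro k hk
      simp only [Set.mem_setOf_eq, not_not] at hk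
      simp [enorm3_eq_zero hk]
    have h0 : (volume : Measure (Fin 3 → ℝ)) {(0 : Fin 3 → ℝ)} = 0 := by
      have : ({(0 : Fin 3 → ℝ)} : Set (Fin 3 → ℝ)) = Set.univ.pi (fun _ => ({0} : Set ℝ)) := by
        ext x
        simp [funext_iff, Set.mem_pi]
      rw [this, volume_pi_pi]
      simp
    exact measure_mono_null hsub h0
  -- the real-valued component functions
  set u : Fin 3 → (Fin 3 → ℝ) → ℝ := fun i k =>
    Gf ρr k * ((k ⬝ᵥ ω) * k i) + Hf ρr k * ω i + Pf ρr k * ω i with hudef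
  have hae : ∀ i : Fin 3, ∀ᵐ k : Fin 3 → ℝ, Φ k i = ((u i k : ℝ) : ℂ) := by
    intro i
    filter_upwards [hnull] with k hk
    exact pointwise_eq ρr ω hρ Ehat hE B hB k hk i
  -- integrability of components
  have hΦi : ∀ i : Fin 3, Integrable (fun k => Φ k i) := by
    intro i
    exact (ContinuousLinearMap.proj (R := ℂ) (φ := fun _ : Fin 3 => ℂ) i).integrable_comp hint1
  have hu_int : ∀ i : Fin 3, Integrable (u i) := by
    intro i
    have hre : Integrable (fun k => (Φ k i).re) := (hΦi i).re
    apply hre.congr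
    filter_upwards [hae i] with k hk
    rw [hk, Complex.ofReal_re]
  have hrest_int : ∀ i : Fin 3, Integrable
      (fun k => Gf ρr k * ((k ⬝ᵥ ω) * k i) + Hf ρr k * ω i) := by
    intro i
    have heq : (fun k => Gf ρr k * ((k ⬝ᵥ ω) * k i) + Hf ρr k * ω i)
        = fun k => u i k - Pf ρr k * ω i := by
      funext k; rw [hudef]; ring
    rw [heq]
    exact (hu_int i).sub (hPint.mul_const (ω i))
  -- invariances
  have hGfl : ∀ m k, Gf ρr (flipE m k) = Gf ρr k := by intro m k; simp [Gf, enorm3_flipE]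
  have hHfl : ∀ m k, Hf ρr (flipE m k) = Hf ρr k := by intro m k; simp [Hf, enorm3_flipE]
  have hGsw : ∀ a b k, Gf ρr (swapE a b k) = Gf ρr k := by intro a b k; simp [Gf, enorm3_swapE]
  have hHsw : ∀ a b k, Hf ρr (swapE a b k) = Hf ρr k := by intro a b k; simp [Hf, enorm3_swapE]
  have htrace : ∀ k, Gf ρr k * (∑ j, k j ^ 2) + 3 * Hf ρr k = -Pf ρr k := by
    intro k
    rw [← sq_enorm3 k]
    by_cases hk : enorm3 k = 0
    · simp [Gf, Hf, Pf, hk]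
    · rw [Gf, Hf, Pf]
      field_simp
      ring
  -- component integral values
  have hcomp : ∀ i : Fin 3, ∫ k, u i k =
      (2/3 : ℝ) * (∫ k, Pf ρr k) * ω i := by
    intro i
    have hsplit : (fun k => u i k) = fun k =>
        (Gf ρr k * ((k ⬝ᵥ ω) * k i) + Hf ρr k * ω i) + Pf ρr k * ω i := by
      funext k; rw [hudef]
    rw [hsplit, integral_add (hrest_int i) (hPint.mul_const (ω i)),
      integral_core (Gf ρr) (Hf ρr) (Pf ρr) ω i hGfl hHfl hGsw hHsw htrace (hrest_int i) hPint,
      integral_mul_const]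
    ring
  -- vector integral components
  have hvec : ∀ i : Fin 3, (∫ k, Φ k) i = ((2/3 : ℝ) * (∫ k, Pf ρr k) * ω i : ℝ) := by
    intro i
    have hproj : (∫ k, Φ k) i =
        ∫ k, Φ k i := by
      have := (ContinuousLinearMap.proj (R := ℂ) (φ := fun _ : Fin 3 => ℂ) i).integral_comp_comm hint1
      exact this.symm
    rw [hproj]
    rw [integral_congr_ae (hae i), ← hcomp i]
    exact integral_ofReal
  have hfirst : (∫ k, Φ k) =
      (fun i => ((((2 : ℝ) / 3) * ∫ k : Fin 3 → ℝ,
        (deriv ρr (enorm3 k)) ^ 2 / (enorm3 k) ^ 2) * ω i : ℂ)) := by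
    funext i
    rw [hvec i, hPeq]
    push_cast
    ring
  refine ⟨hfirst, ?_⟩
  rw [hfirst]
  funext i
  simp only [Pi.add_apply]
  push_cast
  ring
end
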